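/- arXiv:1703.09682 — 8 statements merged into one kernel-verified Lean document; each statement's English description precedes it below -/
import Mathlib

section
/- For every integer t ≥ 1, the sum over all t-element subsets S of the nonnegative integers of 2^(-∑_{i∈S} i) equals 2^t / ∏_{i=1}^{t} (2^i - 1). -/
/-!
Removing the least element `m` of a `(t + 1)`-set `S` and shifting the remaining elements down
by `m + 1` is a bijection onto `ℕ × {t-sets}`, under which `∑ S = m + t (m + 1) + ∑ T`.
Hence `Z_t(x) = ∑_{|S| = t} x ^ (∑ S)` satisfies `Z_{t+1} = x ^ t / (1 - x ^ (t + 1)) · Z_t`,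
so `Z_t = ∏_{i < t} x ^ i / (1 - x ^ (i + 1))`, which at `x = 1/2` is `2 ^ t / ∏_{i=1}^t (2 ^ i - 1)`.
-/

open Finset

namespace Finset

def insertShift (m : ℕ) (T : Finset ℕ) : Finset ℕ :=
  insert m (T.map (addRightEmbedding (m + 1)))

variable {m : ℕ} {T : Finset ℕ}

theorem le_of_mem_map_addRightEmbedding {k y : ℕ} (hy : y ∈ T.map (addRightEmbedding k)) :
    k ≤ y := by
  obtain ⟨x, -, rfl⟩ := mem_map.mp hy
  exact Nat.le_add_left k x

theorem notMem_map_addRightEmbedding : m ∉ T.map (addRightEmbedding (m + 1)) :=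
  fun h => (le_of_mem_map_addRightEmbedding h).not_gt (Nat.lt_succ_self m)

theorem card_insertShift : (insertShift m T).card = T.card + 1 := by
  rw [insertShift, card_insert_of_notMem notMem_map_addRightEmbedding, card_map]

theorem sum_insertShift :
    ∑ i ∈ insertShift m T, i = m + T.card * (m + 1) + ∑ i ∈ T, i := by
  rw [insertShift, sum_insert notMem_map_addRightEmbedding, sum_map]
  simp only [addRightEmbedding_apply, sum_add_distrib, sum_const, smul_eq_mul]
  ring

theorem min'_insertShift : (insertShift m T).min' (insert_nonempty _ _) = m :=
  le_antisymm (min'_le _ _ (mem_insert_self _ _)) <| le_min' _ _ _ fun y hy => by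
    rcases mem_insert.mp hy with rfl | hy
    · exact le_rfl
    · exact (le_of_mem_map_addRightEmbedding hy).trans' (Nat.le_succ m)

theorem image_sub_erase_insertShift :
    ((insertShift m T).erase m).image (· - (m + 1)) = T := by
  rw [insertShift, erase_insert notMem_map_addRightEmbedding, map_eq_image, image_image]
  convert image_id (s := T) using 2
  ext x
  simp

theorem insertShift_image_sub_erase_min' {S : Finset ℕ} (hS : S.Nonempty) :
    insertShift (S.min' hS) ((S.erase (S.min' hS)).image (· - (S.min' hS + 1))) = S := by
  set m := S.min' hS
  have hlt : ∀ x ∈ S.erase m, m < x := fun x hx =>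
    lt_of_le_of_ne (S.min'_le x (mem_of_mem_erase hx)) (ne_of_mem_erase hx).symm
  rw [insertShift, map_eq_image, image_image, image_congr (g := id), image_id,
    insert_erase (S.min'_mem hS)]
  intro x hx
  have hmx := hlt x hx
  simp only [Function.comp_apply, addRightEmbedding_apply, id_eq]
  omega

end Finset

def insertShiftEquiv (t : ℕ) :
    ℕ × {T : Finset ℕ // T.card = t} ≃ {S : Finset ℕ // S.card = t + 1} where
  toFun p := ⟨insertShift p.1 p.2, by rw [card_insertShift, p.2.2]⟩
  invFun S :=
    have hS : S.1.Nonempty := card_pos.mp (by rw [S.2]; omega)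
    (S.1.min' hS, ⟨(S.1.erase (S.1.min' hS)).image (· - (S.1.min' hS + 1)), by
      rw [← Nat.add_right_cancel_iff, ← card_insertShift, insertShift_image_sub_erase_min', S.2]⟩)
  left_inv := by
    rintro ⟨m, T, rfl⟩
    simp only [min'_insertShift, image_sub_erase_insertShift]
  right_inv := by
    rintro ⟨S, hS⟩
    exact Subtype.ext (insertShift_image_sub_erase_min' _)

section

variable {x : ℝ}

theorem hasSum_pow_sum_card_succ (hx₀ : 0 ≤ x) (hx₁ : x < 1) {t : ℕ} {a : ℝ}
    (h : HasSum (fun T : {T : Finset ℕ // T.card = t} => x ^ ∑ i ∈ T.1, i) a) :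
    HasSum (fun S : {S : Finset ℕ // S.card = t + 1} => x ^ ∑ i ∈ S.1, i)
      (x ^ t / (1 - x ^ (t + 1)) * a) := by
  have hr₀ : 0 ≤ x ^ (t + 1) := pow_nonneg hx₀ _
  have hr₁ : x ^ (t + 1) < 1 := pow_lt_one₀ hx₀ hx₁ (Nat.succ_ne_zero t)
  have hgeom : HasSum (fun m : ℕ => x ^ (m + t * (m + 1))) (x ^ t / (1 - x ^ (t + 1))) := by
    have hexp : (fun m : ℕ => x ^ (m + t * (m + 1))) = fun m => x ^ t * (x ^ (t + 1)) ^ m := by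
      ext m
      rw [← pow_mul, ← pow_add]
      ring_nf
    rw [hexp, div_eq_mul_inv]
    exact (hasSum_geometric_of_lt_one hr₀ hr₁).mul_left (x ^ t)
  have hsplit : (fun S : {S : Finset ℕ // S.card = t + 1} => x ^ ∑ i ∈ S.1, i) ∘ insertShiftEquiv t
      = fun p => x ^ (p.1 + t * (p.1 + 1)) * x ^ ∑ i ∈ p.2.1, i := by
    ext ⟨m, T, hT⟩
    simp only [Function.comp_apply, insertShiftEquiv, Equiv.coe_fn_mk]
    rw [sum_insertShift, hT, pow_add]
  rw [← (insertShiftEquiv t).hasSum_iff, hsplit]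
  have hprod : Summable fun p : ℕ × {T : Finset ℕ // T.card = t} =>
      x ^ (p.1 + t * (p.1 + 1)) * x ^ ∑ i ∈ p.2.1, i :=
    hgeom.summable.mul_of_nonneg (g := fun T : {T : Finset ℕ // T.card = t} => x ^ ∑ i ∈ T.1, i)
      h.summable (fun _ => pow_nonneg hx₀ _) (fun _ => pow_nonneg hx₀ _)
  convert hgeom.mul h hprod using 1

theorem hasSum_pow_sum_card (hx₀ : 0 ≤ x) (hx₁ : x < 1) (t : ℕ) :
    HasSum (fun S : {S : Finset ℕ // S.card = t} => x ^ ∑ i ∈ S.1, i)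
      (∏ i ∈ range t, x ^ i / (1 - x ^ (i + 1))) := by
  induction t with
  | zero =>
    have hsingle := hasSum_single (f := fun S : {S : Finset ℕ // S.card = 0} => x ^ ∑ i ∈ S.1, i)
      ⟨∅, rfl⟩ fun S hS => (hS (Subtype.ext (card_eq_zero.mp S.2))).elim
    simpa using hsingle
  | succ t ih =>
    rw [prod_range_succ_comm]
    exact hasSum_pow_sum_card_succ hx₀ hx₁ ih

end

theorem stmt_0_general (t : ℕ) :
    ∑' S : {S : Finset ℕ // S.card = t}, (2 : ℝ) ^ (-((∑ i ∈ S.1, i : ℕ) : ℤ))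
      = 2 ^ t / ∏ i ∈ Finset.Icc 1 t, ((2 : ℝ) ^ i - 1) := by
  have hterm : ∀ n : ℕ, (2 : ℝ) ^ (-(n : ℤ)) = 2⁻¹ ^ n := fun n => by
    rw [zpow_neg, zpow_natCast, inv_pow]
  have hfactor : ∀ i : ℕ, (2⁻¹ : ℝ) ^ i / (1 - 2⁻¹ ^ (i + 1)) = 2 / (2 ^ (i + 1) - 1) := by
    intro i
    rw [inv_pow, inv_pow]
    field_simp
    ring
  simp only [hterm]
  rw [(hasSum_pow_sum_card (by norm_num) (by norm_num) t).tsum_eq]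
  simp only [hfactor, prod_div_distrib, prod_const, card_range]
  rw [range_eq_Ico, prod_Ico_add' (fun i => (2 : ℝ) ^ i - 1), zero_add, Ico_add_one_right_eq_Icc]

theorem stmt_0 (t : ℕ) (ht : 1 ≤ t) :
    ∑' S : {S : Finset ℕ // S.card = t}, (2 : ℝ) ^ (-((∑ i ∈ S.1, i : ℕ) : ℤ))
      = 2 ^ t / ∏ i ∈ Finset.Icc 1 t, ((2 : ℝ) ^ i - 1) :=
  stmt_0_general t
end

section
/- For every real x with 0 ≤ x < 1, the infinite product ∏_{i=1}^{∞} (1 − x^i) is at least 1 − x − x². -/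
private lemma range_bound (x : ℝ) (hx0 : 0 ≤ x) (hx1 : x < 1) (n : ℕ) :
    1 - x - x ^ 2 + x ^ (n + 1) ≤ ∏ i ∈ Finset.range n, (1 - x ^ (i + 1)) := by
  induction n with
  | zero => simp; nlinarith
  | succ n ih =>
    rw [Finset.prod_range_succ]
    have hx1' : x ≤ 1 := hx1.le
    have hfac : 0 ≤ 1 - x ^ (n + 1) := by
      linarith [pow_le_one₀ hx0 hx1' (n := n + 1)]
    have hP0 : 0 ≤ ∏ i ∈ Finset.range n, (1 - x ^ (i + 1)) := by
      apply Finset.prod_nonneg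
      intro i _
      linarith [pow_le_one₀ hx0 hx1' (n := i + 1)]
    match n with
    | 0 => simp only [Finset.range_zero, Finset.prod_empty, one_mul]; norm_num
    | Nat.succ m =>
      set P := ∏ i ∈ Finset.range (m + 1), (1 - x ^ (i + 1)) with hPdef
      set y := x ^ (m + 2) with hy
      have hy0 : 0 ≤ y := pow_nonneg hx0 _
      have hyx2 : y ≤ x ^ 2 := pow_le_pow_of_le_one hx0 hx1' (by omega)
      have h1 : x ^ (m + 1 + 1) = y := rfl
      have h2 : x ^ (m + 1 + 1 + 1) = x * y := by rw [hy]; ring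
      rw [h1, h2] at *
      -- goal : 1 - x - x^2 + x*y ≤ P * (1 - y)
      have hih : 1 - x - x ^ 2 + y ≤ P := ih
      nlinarith [mul_nonneg hy0 (sub_nonneg.2 hyx2), mul_nonneg (sub_nonneg.2 hih) hfac]

theorem stmt_2 (x : ℝ) (hx0 : 0 ≤ x) (hx1 : x < 1) :
    1 - x - x ^ 2 ≤ ∏' i : ℕ, (1 - x ^ (i + 1)) := by
  set f : ℕ → ℝ := fun i => 1 - x ^ (i + 1) with hf
  have hx1' : x ≤ 1 := hx1.le
  have hf0 : ∀ i, 0 ≤ f i := fun i => by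
    simp only [hf]; linarith [pow_le_one₀ hx0 hx1' (n := i + 1)]
  have hf1 : ∀ i, f i ≤ 1 := fun i => by
    simp only [hf]; linarith [pow_nonneg hx0 (i + 1)]
  have hanti : Antitone fun s : Finset ℕ => ∏ i ∈ s, f i := by
    intro s t hst
    calc ∏ i ∈ t, f i = (∏ i ∈ t \ s, f i) * ∏ i ∈ s, f i := (Finset.prod_sdiff hst).symm
      _ ≤ 1 * ∏ i ∈ s, f i := by
          apply mul_le_mul_of_nonneg_right _ (Finset.prod_nonneg fun i _ => hf0 i)
          exact Finset.prod_le_one (fun i _ => hf0 i) (fun i _ => hf1 i)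
      _ = ∏ i ∈ s, f i := one_mul _
  have hbdd : BddBelow (Set.range fun s : Finset ℕ => ∏ i ∈ s, f i) := by
    refine ⟨0, ?_⟩
    rintro _ ⟨s, rfl⟩
    exact Finset.prod_nonneg fun i _ => hf0 i
  have hHasProd : HasProd f (⨅ s : Finset ℕ, ∏ i ∈ s, f i) :=
    tendsto_atTop_ciInf hanti hbdd
  rw [hHasProd.tprod_eq]
  apply le_ciInf
  intro s
  obtain ⟨n, hn⟩ : ∃ n, s ⊆ Finset.range n := ⟨(s.sup id) + 1, fun i hi =>
    Finset.mem_range.2 (Nat.lt_succ_of_le (Finset.le_sup (f := id) hi))⟩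
  calc 1 - x - x ^ 2 ≤ 1 - x - x ^ 2 + x ^ (n + 1) := by linarith [pow_nonneg hx0 (n + 1)]
    _ ≤ ∏ i ∈ Finset.range n, f i := range_bound x hx0 hx1 n
    _ ≤ ∏ i ∈ s, f i := hanti hn
end

section
/- Every red/blue coloring of the edges of the complete graph on 2^(2t−3) vertices (t ≥ 2) contains at least (1/t!)·2^(C(t,2) − 2) monochromatic cliques of size t. -/
/-!
Run a greedy process on the `2 ^ N` vertices: the current set `A k` has `2 ^ (N - k)` vertices;
pick a pivot `w k ∈ A k` and let `A (k + 1)` consist of `2 ^ (N - k - 1)` vertices of the larger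
colour class `χ k` of `w k` inside `A k`. Every later pivot is joined to `w k` in colour `χ k`, so
when `2 r ≤ N + 1` some colour occurs `r` times among `χ 0, …, χ (N - 1)`, and those `r` pivots
together with `w N` span a monochromatic `(r + 1)`-clique.

The runs are indexed by `2 ^ ∑ k ≤ N, (N - k)` transcripts (the positions of the pivots). A
transcript is determined by its clique `T`, the set `P` of the `r` steps used, the order in which
`T` is visited, and its entries outside `P`; so every clique comes from at most
`(r + 1)! ∑_P ∏_{k ∉ P} 2 ^ (N - k)` transcripts. With `s = N - r`, this sum is
`2 ^ (s (s + 1) / 2)` times the Gaussian binomial `[N, s]` at `q = 2`, hence at most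
`4 · 2 ^ (N + (N - 1) + ⋯ + (N - s + 1))` because `∏ (1 - 2 ^ (-i)) ≥ 1 / 4`. Comparing the two
counts gives `t! · #cliques ≥ 2 ^ (C(t, 2) - 2)` for `t = r + 1`.
-/

open Finset

namespace MonochromaticCliqueCount

section SortedAccess

variable {α : Type*} [LinearOrder α]

def sortedTake (s : Finset α) (m : ℕ) : Finset α := ((s.sort (· ≤ ·)).take m).toFinset

theorem sortedTake_subset (s : Finset α) (m : ℕ) : sortedTake s m ⊆ s := fun a ha => by
  rw [sortedTake, List.mem_toFinset] at ha
  exact (mem_sort _).1 (List.mem_of_mem_take ha)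

theorem card_sortedTake {s : Finset α} {m : ℕ} (h : m ≤ #s) : #(sortedTake s m) = m := by
  rw [sortedTake, List.toFinset_card_of_nodup ((sort_nodup s _).sublist (List.take_sublist _ _)),
    List.length_take, length_sort]
  omega

def sortedGetD (s : Finset α) (d : α) (i : ℕ) : α := (s.sort (· ≤ ·)).getD i d

theorem sortedGetD_mem {s : Finset α} (d : α) {i : ℕ} (h : i < #s) : sortedGetD s d i ∈ s := by
  rw [sortedGetD, List.getD_eq_getElem _ _ (by rwa [length_sort])]
  exact (mem_sort _).1 (List.getElem_mem _)

theorem sortedGetD_injOn (s : Finset α) (d : α) : Set.InjOn (sortedGetD s d) (Set.Iio #s) := by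
  intro i hi j hj h
  rw [Set.mem_Iio] at hi hj
  rw [sortedGetD, sortedGetD, List.getD_eq_getElem _ _ (by rwa [length_sort]),
    List.getD_eq_getElem _ _ (by rwa [length_sort])] at h
  exact (sort_nodup s _).getElem_inj_iff.1 h

end SortedAccess

section GaussianBinomial

/-- `2 ^ (r (r + 1) / 2)` times the Gaussian binomial coefficient `[N, r]` at `q = 2`. -/
def subsetPowSum (N r : ℕ) : ℕ := ∑ S ∈ (Icc 1 N).powersetCard r, 2 ^ ∑ j ∈ S, j

def topSum (N r : ℕ) : ℕ := ∑ i ∈ range r, (N - i)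

theorem subsetPowSum_eq_zero {N r : ℕ} (h : N < r) : subsetPowSum N r = 0 := by
  rw [subsetPowSum, powersetCard_eq_empty.2 (by simpa using h), sum_empty]

theorem subsetPowSum_succ_succ (N r : ℕ) :
    subsetPowSum (N + 1) (r + 1) = subsetPowSum N (r + 1) + 2 ^ (N + 1) * subsetPowSum N r := by
  have hN : N + 1 ∉ Icc 1 N := by simp
  have hnotMem : ∀ S ∈ (Icc 1 N).powersetCard r, N + 1 ∉ S := fun S hS h =>
    hN ((mem_powersetCard.1 hS).1 h)
  have hinj : Set.InjOn (insert (N + 1)) ((Icc 1 N).powersetCard r : Set (Finset ℕ)) :=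
    fun S hS S' hS' h => by
      rw [← erase_insert (hnotMem S hS), ← erase_insert (hnotMem S' hS'), h]
  have hdisj : Disjoint ((Icc 1 N).powersetCard (r + 1))
      (((Icc 1 N).powersetCard r).image (insert (N + 1))) := by
    refine disjoint_left.2 fun S hS hS' => ?_
    obtain ⟨S', -, rfl⟩ := mem_image.1 hS'
    exact hN ((mem_powersetCard.1 hS).1 (mem_insert_self _ _))
  rw [subsetPowSum, ← insert_Icc_right_eq_Icc_add_one (by omega), powersetCard_succ_insert hN,
    sum_union hdisj, sum_image hinj, subsetPowSum, subsetPowSum, mul_sum]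
  congr 1
  refine sum_congr rfl fun S hS => ?_
  rw [sum_insert (hnotMem S hS), pow_add]

theorem topSum_succ_succ (N r : ℕ) : topSum (N + 1) (r + 1) = N + 1 + topSum N r := by
  rw [topSum, sum_range_succ', topSum]
  simp only [Nat.add_sub_add_right, Nat.sub_zero, add_comm]

-- The extra term `(1 / 2) ^ (r + 1)` is what makes the induction close.
theorem quarter_add_le_prod_one_sub_half_pow (r : ℕ) :
    1 / 4 + (1 / 2 : ℝ) ^ (r + 1) ≤ ∏ i ∈ range r, (1 - (1 / 2 : ℝ) ^ (i + 1)) := by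
  induction r with
  | zero => norm_num
  | succ r ih =>
    rw [prod_range_succ]
    rcases r.eq_zero_or_pos with rfl | hr
    · norm_num
    set a : ℝ := (1 / 2) ^ (r + 1)
    have ha : a ≤ 1 / 4 := by
      calc a ≤ (1 / 2) ^ 2 := pow_le_pow_of_le_one (by norm_num) (by norm_num) (by omega)
        _ = 1 / 4 := by norm_num
    have ha' : (1 / 2 : ℝ) ^ (r + 1 + 1) = a / 2 := by rw [pow_succ]; ring
    rw [ha']
    have ha0 : 0 ≤ a := by positivity
    nlinarith [mul_le_mul_of_nonneg_right ih (by linarith : (0 : ℝ) ≤ 1 - a),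
      mul_nonneg ha0 (by linarith : (0 : ℝ) ≤ 1 / 4 - a)]

theorem subsetPowSum_mul_prod_le (N r : ℕ) :
    (subsetPowSum N r : ℝ) * ∏ i ∈ range r, (1 - (1 / 2 : ℝ) ^ (i + 1)) ≤ 2 ^ topSum N r := by
  induction N generalizing r with
  | zero =>
    rcases r.eq_zero_or_pos with rfl | hr
    · simp [subsetPowSum, topSum]
    · simp [subsetPowSum_eq_zero hr]
  | succ N ih =>
    rcases r with _ | r
    · simp [subsetPowSum, topSum]
    rcases lt_or_ge N r with hNr | hrN
    · simp [subsetPowSum_eq_zero (by omega : N + 1 < r + 1)]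
    set p := ∏ i ∈ range r, (1 - (1 / 2 : ℝ) ^ (i + 1))
    set a : ℝ := (1 / 2) ^ (r + 1)
    have ha : a ≤ 1 := pow_le_one₀ (by norm_num) (by norm_num)
    have hshift : topSum (N + 1) (r + 1) = topSum N (r + 1) + (r + 1) := by
      rw [topSum_succ_succ, topSum, topSum, sum_range_succ]
      omega
    have hfirst : (2 : ℝ) ^ topSum N (r + 1) = 2 ^ topSum (N + 1) (r + 1) * a := by
      rw [hshift, pow_add, mul_assoc, ← mul_pow]
      norm_num
    calc (subsetPowSum (N + 1) (r + 1) : ℝ) * ∏ i ∈ range (r + 1), (1 - (1 / 2 : ℝ) ^ (i + 1))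
        = subsetPowSum N (r + 1) * ∏ i ∈ range (r + 1), (1 - (1 / 2 : ℝ) ^ (i + 1))
          + 2 ^ (N + 1) * (subsetPowSum N r * p) * (1 - a) := by
          rw [subsetPowSum_succ_succ, prod_range_succ]
          push_cast
          ring
      _ ≤ 2 ^ topSum N (r + 1) + 2 ^ (N + 1) * 2 ^ topSum N r * (1 - a) :=
          add_le_add (ih (r + 1)) (mul_le_mul_of_nonneg_right
            (mul_le_mul_of_nonneg_left (ih r) (by positivity)) (by linarith))
      _ = 2 ^ topSum (N + 1) (r + 1) := by
          rw [hfirst, topSum_succ_succ, pow_add]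
          ring

theorem subsetPowSum_le (N r : ℕ) : (subsetPowSum N r : ℝ) ≤ 4 * 2 ^ topSum N r := by
  have hprod : 1 / 4 ≤ ∏ i ∈ range r, (1 - (1 / 2 : ℝ) ^ (i + 1)) := by
    linarith [quarter_add_le_prod_one_sub_half_pow r,
      pow_pos (by norm_num : (0 : ℝ) < 1 / 2) (r + 1)]
  calc (subsetPowSum N r : ℝ) = 4 * (subsetPowSum N r * (1 / 4)) := by ring
    _ ≤ 4 * (subsetPowSum N r * ∏ i ∈ range r, (1 - (1 / 2 : ℝ) ^ (i + 1))) := by gcongr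
    _ ≤ 4 * 2 ^ topSum N r := by gcongr; exact subsetPowSum_mul_prod_le N r

end GaussianBinomial

section ColorClass

variable {V : Type*} [DecidableEq V] (c : V → V → Bool)

def colorClass (A : Finset V) (v : V) (b : Bool) : Finset V := {u ∈ A | u ≠ v ∧ c v u = b}

@[simp]
theorem mem_colorClass {A : Finset V} {v u : V} {b : Bool} :
    u ∈ colorClass c A v b ↔ u ∈ A ∧ u ≠ v ∧ c v u = b :=
  mem_filter

def majorityColor (A : Finset V) (v : V) : Bool :=
  decide (#(colorClass c A v false) ≤ #(colorClass c A v true))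

theorem card_colorClass_false_add_true {A : Finset V} {v : V} (hv : v ∈ A) :
    #(colorClass c A v false) + #(colorClass c A v true) = #A - 1 := by
  have hdisj : Disjoint (colorClass c A v false) (colorClass c A v true) :=
    disjoint_left.2 fun u hu hu' => by simp_all
  rw [← card_erase_of_mem hv, ← card_union_of_disjoint hdisj]
  congr 1
  ext u
  cases h : c v u <;> simp [h, and_comm]

theorem le_card_colorClass_majorityColor {A : Finset V} {v : V} (hv : v ∈ A) {m : ℕ}
    (hA : #A = 2 * m) : m ≤ #(colorClass c A v (majorityColor c A v)) := by
  have := card_colorClass_false_add_true c hv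
  by_cases h : #(colorClass c A v false) ≤ #(colorClass c A v true) <;>
    simp only [majorityColor, h, decide_true, decide_false] <;> omega

end ColorClass

section GreedyProcess

variable {V : Type*} [Fintype V] [LinearOrder V] [Inhabited V] (c : V → V → Bool)

-- Keeping exactly half of the majority class makes `#(greedySet k) = 2 ^ (N - k)` independent
-- of the transcript `x`, so the transcripts form a box.
def greedySet (N : ℕ) (x : ℕ → ℕ) : ℕ → Finset V
  | 0 => univ
  | k + 1 =>
    let A := greedySet N x k
    let v := sortedGetD A default (x k)
    sortedTake (colorClass c A v (majorityColor c A v)) (2 ^ (N - (k + 1)))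

def greedyVertex (N : ℕ) (x : ℕ → ℕ) (k : ℕ) : V := sortedGetD (greedySet c N x k) default (x k)

def greedyColor (N : ℕ) (x : ℕ → ℕ) (k : ℕ) : Bool :=
  majorityColor c (greedySet c N x k) (greedyVertex c N x k)

variable {c} {N : ℕ} {x : ℕ → ℕ}

theorem greedySet_succ_subset (k : ℕ) :
    greedySet c N x (k + 1) ⊆ colorClass c (greedySet c N x k) (greedyVertex c N x k)
      (greedyColor c N x k) :=
  sortedTake_subset _ _

theorem greedySet_antitone : Antitone (greedySet c N x) :=
  antitone_nat_of_succ_le fun k => (greedySet_succ_subset k).trans (filter_subset _ _)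

theorem card_greedySet (hV : Fintype.card V = 2 ^ N) (hx : ∀ k, x k < 2 ^ (N - k)) {k : ℕ}
    (hk : k ≤ N) : #(greedySet c N x k) = 2 ^ (N - k) := by
  induction k with
  | zero => simpa [greedySet] using hV
  | succ k ih =>
    have hA := ih (by omega)
    have hhalf : #(greedySet c N x k) = 2 * 2 ^ (N - (k + 1)) := by
      rw [hA, ← pow_succ']
      congr 1
      omega
    exact card_sortedTake (le_card_colorClass_majorityColor c
      (sortedGetD_mem _ (hA ▸ hx k)) hhalf)

theorem greedyVertex_mem (hV : Fintype.card V = 2 ^ N) (hx : ∀ k, x k < 2 ^ (N - k)) {k : ℕ}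
    (hk : k ≤ N) : greedyVertex c N x k ∈ greedySet c N x k :=
  sortedGetD_mem _ ((card_greedySet hV hx hk).symm ▸ hx k)

theorem greedyVertex_mem_colorClass (hV : Fintype.card V = 2 ^ N) (hx : ∀ k, x k < 2 ^ (N - k))
    {k l : ℕ} (hkl : k < l) (hl : l ≤ N) :
    greedyVertex c N x l ∈
      colorClass c (greedySet c N x k) (greedyVertex c N x k) (greedyColor c N x k) :=
  greedySet_succ_subset k (greedySet_antitone hkl (greedyVertex_mem hV hx hl))

theorem greedyVertex_injOn (hV : Fintype.card V = 2 ^ N) (hx : ∀ k, x k < 2 ^ (N - k)) :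
    Set.InjOn (greedyVertex c N x) (Set.Iic N) := by
  intro k hk l hl h
  by_contra hne
  rcases lt_or_gt_of_ne hne with hkl | hlk
  · exact (mem_colorClass c).1 (greedyVertex_mem_colorClass hV hx hkl hl) |>.2.1 h.symm
  · exact (mem_colorClass c).1 (greedyVertex_mem_colorClass hV hx hlk hk) |>.2.1 h

theorem color_greedyVertex (hV : Fintype.card V = 2 ^ N) (hx : ∀ k, x k < 2 ^ (N - k))
    {k l : ℕ} (hkl : k < l) (hl : l ≤ N) :
    c (greedyVertex c N x k) (greedyVertex c N x l) = greedyColor c N x k :=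
  ((mem_colorClass c).1 (greedyVertex_mem_colorClass hV hx hkl hl)).2.2

theorem greedySet_congr {y : ℕ → ℕ} {k : ℕ} (h : ∀ j < k, x j = y j) :
    greedySet c N x k = greedySet c N y k := by
  induction k with
  | zero => rfl
  | succ k ih =>
    simp only [greedySet, ih fun j hj => h j (by omega), h k (by omega)]

end GreedyProcess

section CliqueExtraction

variable {V : Type*} [Fintype V] [LinearOrder V] [Inhabited V] (c : V → V → Bool) (N r : ℕ)

def cliqueColor (x : ℕ → ℕ) : Bool := decide (r ≤ #{k ∈ range N | greedyColor c N x k = true})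

def cliqueSteps (x : ℕ → ℕ) : Finset ℕ :=
  sortedTake {k ∈ range N | greedyColor c N x k = cliqueColor c N r x} r

def greedyClique (x : ℕ → ℕ) : Finset V :=
  (insert N (cliqueSteps c N r x)).image (greedyVertex c N x)

variable {c N r} {x : ℕ → ℕ}

theorem cliqueSteps_subset_range : cliqueSteps c N r x ⊆ range N :=
  (sortedTake_subset _ _).trans (filter_subset _ _)

theorem le_of_mem_insert_cliqueSteps {k : ℕ} (hk : k ∈ insert N (cliqueSteps c N r x)) : k ≤ N := by
  rcases mem_insert.1 hk with rfl | hk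
  · exact le_rfl
  · exact (mem_range.1 (cliqueSteps_subset_range hk)).le

theorem greedyColor_of_mem_cliqueSteps {k : ℕ} (hk : k ∈ cliqueSteps c N r x) :
    greedyColor c N x k = cliqueColor c N r x :=
  (mem_filter.1 (sortedTake_subset _ _ hk)).2

theorem card_cliqueSteps (hr : 2 * r ≤ N + 1) : #(cliqueSteps c N r x) = r := by
  apply card_sortedTake
  have hsplit := card_filter_add_card_filter_not (s := range N)
    (fun k => greedyColor c N x k = true)
  simp only [Bool.not_eq_true, card_range] at hsplit
  by_cases h : r ≤ #{k ∈ range N | greedyColor c N x k = true}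
  · simp only [cliqueColor, h, decide_true]
  · simp only [cliqueColor, h, decide_false]
    omega

theorem card_greedyClique (hV : Fintype.card V = 2 ^ N) (hx : ∀ k, x k < 2 ^ (N - k))
    (hr : 2 * r ≤ N + 1) : #(greedyClique c N r x) = r + 1 := by
  have hN : N ∉ cliqueSteps c N r x := fun h => by simpa using cliqueSteps_subset_range h
  rw [greedyClique, card_image_of_injOn ((greedyVertex_injOn hV hx).mono
    fun k hk => le_of_mem_insert_cliqueSteps hk), card_insert_of_notMem hN, card_cliqueSteps hr]

theorem color_greedyVertex_of_mem_insert_cliqueSteps (hV : Fintype.card V = 2 ^ N)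
    (hx : ∀ k, x k < 2 ^ (N - k)) {k l : ℕ} (hk : k ∈ insert N (cliqueSteps c N r x))
    (hl : l ∈ insert N (cliqueSteps c N r x)) (hkl : k < l) :
    c (greedyVertex c N x k) (greedyVertex c N x l) = cliqueColor c N r x := by
  have hl' := le_of_mem_insert_cliqueSteps hl
  rw [color_greedyVertex (c := c) hV hx hkl hl']
  exact greedyColor_of_mem_cliqueSteps ((mem_insert.1 hk).resolve_left (by omega))

theorem greedyClique_monochromatic (hV : Fintype.card V = 2 ^ N) (hx : ∀ k, x k < 2 ^ (N - k))
    (hsym : ∀ i j, c i j = c j i) :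
    ∃ b, ∀ i ∈ greedyClique c N r x, ∀ j ∈ greedyClique c N r x, i ≠ j → c i j = b := by
  refine ⟨cliqueColor c N r x, fun i hi j hj hij => ?_⟩
  obtain ⟨k, hk, rfl⟩ := mem_image.1 hi
  obtain ⟨l, hl, rfl⟩ := mem_image.1 hj
  rcases lt_trichotomy k l with hkl | rfl | hlk
  · exact color_greedyVertex_of_mem_insert_cliqueSteps hV hx hk hl hkl
  · exact absurd rfl hij
  · rw [hsym]
    exact color_greedyVertex_of_mem_insert_cliqueSteps hV hx hl hk hlk

end CliqueExtraction

section Reflection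

theorem image_tsub_image_tsub {N : ℕ} {S : Finset ℕ} (hS : ∀ k ∈ S, k ≤ N) :
    (S.image (N - ·)).image (N - ·) = S := by
  rw [image_image]
  refine (image_congr fun k hk => ?_).trans image_id
  have := hS k hk
  simp only [Function.comp_apply, id_eq]
  omega

theorem prod_ite_eq_two_pow_sum_image {N : ℕ} {P : Finset ℕ} (hP : P ⊆ range N) :
    ∏ k ∈ range (N + 1), (if k ∈ P then 1 else 2 ^ (N - k)) =
      2 ^ ∑ j ∈ (range N \ P).image (N - ·), j := by
  have hNP : N ∉ P := fun h => by simpa using hP h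
  rw [prod_range_succ, if_neg hNP, Nat.sub_self, pow_zero, mul_one,
    sum_image fun a ha b hb h => ?_, ← prod_pow_eq_pow_sum, sdiff_eq_filter, prod_filter]
  · exact prod_congr rfl fun k _ => by split_ifs <;> rfl
  · simp only [coe_sdiff, coe_range, Set.mem_sdiff, Set.mem_Iio] at ha hb
    omega

theorem sum_prod_ite_eq_subsetPowSum {N r : ℕ} (hr : r ≤ N) :
    ∑ P ∈ (range N).powersetCard r, ∏ k ∈ range (N + 1), (if k ∈ P then 1 else 2 ^ (N - k)) =
      subsetPowSum N (N - r) := by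
  have hrefl : ∀ S ⊆ Icc 1 N, S.image (N - ·) ⊆ range N := fun S hS j hj => by
    obtain ⟨k, hk, rfl⟩ := mem_image.1 hj
    have := mem_Icc.1 (hS hk)
    exact mem_range.2 (by omega)
  rw [subsetPowSum]
  refine sum_nbij' (fun P => (range N \ P).image (N - ·)) (fun S => range N \ S.image (N - ·))
    (fun P hP => ?_) (fun S hS => ?_) (fun P hP => ?_) (fun S hS => ?_)
    (fun P hP => prod_ite_eq_two_pow_sum_image (mem_powersetCard.1 hP).1)
  · obtain ⟨hPN, hPr⟩ := mem_powersetCard.1 hP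
    refine mem_powersetCard.2 ⟨fun j hj => ?_, ?_⟩
    · obtain ⟨k, hk, rfl⟩ := mem_image.1 hj
      have := mem_range.1 (mem_sdiff.1 hk).1
      exact mem_Icc.2 (by omega)
    · rw [card_image_of_injOn fun a ha b hb h => ?_, card_sdiff_of_subset hPN, card_range, hPr]
      simp only [coe_sdiff, coe_range, Set.mem_sdiff, Set.mem_Iio] at ha hb h
      omega
  · obtain ⟨hSN, hSr⟩ := mem_powersetCard.1 hS
    refine mem_powersetCard.2 ⟨sdiff_subset, ?_⟩
    rw [card_sdiff_of_subset (hrefl S hSN), card_range, card_image_of_injOn fun a ha b hb h => ?_,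
      hSr]
    · omega
    · have := mem_Icc.1 (hSN ha)
      have := mem_Icc.1 (hSN hb)
      omega
  · have hPN := (mem_powersetCard.1 hP).1
    rw [image_tsub_image_tsub fun k hk => (mem_range.1 (mem_sdiff.1 hk).1).le,
      Finset.sdiff_sdiff_eq_self hPN]
  · have hSN := (mem_powersetCard.1 hS).1
    rw [Finset.sdiff_sdiff_eq_self (hrefl S hSN),
      image_tsub_image_tsub fun k hk => (mem_Icc.1 (hSN hk)).2]

end Reflection

section Transcripts

def transcripts (N : ℕ) : Finset (Fin (N + 1) → ℕ) :=
  Fintype.piFinset fun k => range (2 ^ (N - k))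

def toSeq {N : ℕ} (x : Fin (N + 1) → ℕ) (k : ℕ) : ℕ := if h : k < N + 1 then x ⟨k, h⟩ else 0

@[simp]
theorem toSeq_val {N : ℕ} (x : Fin (N + 1) → ℕ) (k : Fin (N + 1)) : toSeq x k = x k :=
  dif_pos k.isLt

theorem toSeq_lt {N : ℕ} {x : Fin (N + 1) → ℕ} (hx : x ∈ transcripts N) (k : ℕ) :
    toSeq x k < 2 ^ (N - k) := by
  unfold toSeq
  split_ifs with h
  · exact mem_range.1 (Fintype.mem_piFinset.1 hx ⟨k, h⟩)
  · exact Nat.two_pow_pos _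

theorem card_transcripts (N : ℕ) : #(transcripts N) = 2 ^ ∑ k ∈ range (N + 1), (N - k) := by
  rw [transcripts, Fintype.card_piFinset, ← prod_pow_eq_pow_sum,
    ← Fin.prod_univ_eq_prod_range (fun k => 2 ^ (N - k))]
  simp only [card_range]

end Transcripts

section Encoding

variable {V : Type*} [LinearOrder V]

def cliqueCodes (T : Finset V) (N r : ℕ) : Finset (Σ _ : Finset ℕ, List V × (Fin (N + 1) → ℕ)) :=
  ((range N).powersetCard r).sigma fun P =>
    (T.sort (· ≤ ·)).permutations.toFinset ×ˢ
      Fintype.piFinset fun k : Fin (N + 1) =>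
        if (k : ℕ) ∈ P then ({0} : Finset ℕ) else range (2 ^ (N - k))

theorem card_cliqueCodes_le (T : Finset V) (N r : ℕ) :
    #(cliqueCodes T N r) ≤
      (#T).factorial * ∑ P ∈ (range N).powersetCard r,
        ∏ k ∈ range (N + 1), (if k ∈ P then 1 else 2 ^ (N - k)) := by
  rw [cliqueCodes, card_sigma, mul_sum]
  refine sum_le_sum fun P _ => ?_
  rw [card_product, Fintype.card_piFinset,
    ← Fin.prod_univ_eq_prod_range (fun k => if k ∈ P then 1 else 2 ^ (N - k))]
  refine Nat.mul_le_mul ?_ (prod_le_prod' fun k _ => ?_)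
  · calc #(T.sort (· ≤ ·)).permutations.toFinset
        ≤ (T.sort (· ≤ ·)).permutations.length := List.toFinset_card_le _
      _ = (#T).factorial := by rw [List.length_permutations, length_sort]
  · split_ifs <;> simp

variable [Fintype V] [Inhabited V]

def cliqueCode (c : V → V → Bool) (N r : ℕ) (x : Fin (N + 1) → ℕ) :
    Σ _ : Finset ℕ, List V × (Fin (N + 1) → ℕ) :=
  ⟨cliqueSteps c N r (toSeq x),
    ((insert N (cliqueSteps c N r (toSeq x))).sort (· ≤ ·)).map (greedyVertex c N (toSeq x)),
    fun k => if (k : ℕ) ∈ cliqueSteps c N r (toSeq x) then 0 else x k⟩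

variable {c : V → V → Bool} {N r : ℕ}

theorem cliqueCode_mem_cliqueCodes (hV : Fintype.card V = 2 ^ N) (hr : 2 * r ≤ N + 1)
    {x : Fin (N + 1) → ℕ} (hx : x ∈ transcripts N) :
    cliqueCode c N r x ∈ cliqueCodes (greedyClique c N r (toSeq x)) N r := by
  have hinj : Set.InjOn (greedyVertex c N (toSeq x)) (Set.Iic N) :=
    greedyVertex_injOn hV (toSeq_lt hx)
  unfold cliqueCode
  refine mem_sigma.2 ⟨mem_powersetCard.2 ⟨cliqueSteps_subset_range, card_cliqueSteps hr⟩,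
    mem_product.2 ⟨?_, Fintype.mem_piFinset.2 fun k => ?_⟩⟩
  · rw [List.mem_toFinset, List.mem_permutations, List.perm_ext_iff_of_nodup
      ((sort_nodup _ _).map_on fun k hk l hl => hinj (le_of_mem_insert_cliqueSteps
        ((mem_sort _).1 hk)) (le_of_mem_insert_cliqueSteps ((mem_sort _).1 hl))) (sort_nodup _ _)]
    simp [greedyClique, eq_comm]
  · dsimp only
    split_ifs
    · exact mem_singleton_self _
    · exact Fintype.mem_piFinset.1 hx k

theorem cliqueCode_injOn (hV : Fintype.card V = 2 ^ N) :
    Set.InjOn (cliqueCode c N r) (transcripts N) := by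
  intro x hx y hy h
  simp only [cliqueCode, Sigma.mk.injEq, heq_eq_eq, Prod.mk.injEq] at h
  obtain ⟨hsteps, hvisits, hrest⟩ := h
  rw [← hsteps, List.map_inj_left] at hvisits
  suffices hseq : ∀ k, toSeq x k = toSeq y k from funext fun k => by simpa using hseq k
  intro k
  induction k using Nat.strong_induction_on with
  | _ k ih =>
    by_cases hk : k ∈ cliqueSteps c N r (toSeq x)
    · have hkN : k ≤ N := le_of_mem_insert_cliqueSteps (mem_insert_of_mem hk)
      have hset : greedySet c N (toSeq x) k = greedySet c N (toSeq y) k := greedySet_congr ih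
      have hcard := card_greedySet (c := c) hV (toSeq_lt hx) hkN
      have hvertex := hvisits k ((mem_sort _).2 (mem_insert_of_mem hk))
      rw [greedyVertex, greedyVertex, ← hset] at hvertex
      exact sortedGetD_injOn _ _ (by rw [Set.mem_Iio, hcard]; exact toSeq_lt hx k)
        (by rw [Set.mem_Iio, hcard]; exact toSeq_lt hy k) hvertex
    · by_cases hkN : k < N + 1
      · have := congrFun hrest ⟨k, hkN⟩
        rw [← hsteps] at this
        simpa [toSeq, hkN, hk] using this
      · simp [toSeq, hkN]

end Encoding

section Counting

theorem sum_range_tsub_eq_topSum_add_choose {N r : ℕ} (hr : r ≤ N) :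
    ∑ k ∈ range (N + 1), (N - k) = topSum N (N - r) + (r + 1).choose 2 := by
  have htail : ∑ k ∈ range (r + 1), (N - (N - r + k)) = ∑ k ∈ range (r + 1), k := by
    rw [← sum_range_reflect]
    exact sum_congr rfl fun k hk => by have := mem_range.1 hk; omega
  rw [show N + 1 = (N - r) + (r + 1) by omega, sum_range_add, topSum, htail, sum_range_id,
    Nat.choose_two_right]

variable {V : Type*} [Fintype V] [LinearOrder V] [Inhabited V] {c : V → V → Bool} {N r : ℕ}

theorem card_transcripts_le (hV : Fintype.card V = 2 ^ N) (hsym : ∀ i j, c i j = c j i)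
    (hr : 2 * r ≤ N + 1) :
    #(transcripts N) ≤ ((r + 1).factorial * subsetPowSum N (N - r)) *
      #{S : Finset V | #S = r + 1 ∧ ∃ b, ∀ i ∈ S, ∀ j ∈ S, i ≠ j → c i j = b} := by
  refine card_le_mul_card_image_of_maps_to (f := fun x => greedyClique c N r (toSeq x))
    (fun x hx => mem_filter.2 ⟨mem_univ _, card_greedyClique hV (toSeq_lt hx) hr,
      greedyClique_monochromatic hV (toSeq_lt hx) hsym⟩) _ fun T hT => ?_
  calc #{x ∈ transcripts N | greedyClique c N r (toSeq x) = T}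
      ≤ #(cliqueCodes T N r) :=
        card_le_card_of_injOn (cliqueCode c N r)
          (fun x hx => (mem_filter.1 hx).2 ▸ cliqueCode_mem_cliqueCodes hV hr (mem_filter.1 hx).1)
          ((cliqueCode_injOn hV).mono (filter_subset _ _))
    _ ≤ (#T).factorial * ∑ P ∈ (range N).powersetCard r,
          ∏ k ∈ range (N + 1), (if k ∈ P then 1 else 2 ^ (N - k)) := card_cliqueCodes_le T N r
    _ = (r + 1).factorial * subsetPowSum N (N - r) := by
        rw [(mem_filter.1 hT).2.1, sum_prod_ite_eq_subsetPowSum (by omega)]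

theorem two_pow_choose_le_card_monochromatic (hV : Fintype.card V = 2 ^ N)
    (hsym : ∀ i j, c i j = c j i) (hr : 2 * r ≤ N + 1) :
    (2 : ℝ) ^ (r + 1).choose 2 ≤ 4 * (r + 1).factorial *
      #{S : Finset V | #S = r + 1 ∧ ∃ b, ∀ i ∈ S, ∀ j ∈ S, i ≠ j → c i j = b} := by
  set M := #{S : Finset V | #S = r + 1 ∧ ∃ b, ∀ i ∈ S, ∀ j ∈ S, i ≠ j → c i j = b}
  have hcount : (2 : ℝ) ^ topSum N (N - r) * 2 ^ (r + 1).choose 2 ≤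
      (r + 1).factorial * subsetPowSum N (N - r) * M := by
    have h := card_transcripts_le hV hsym hr
    rw [card_transcripts, sum_range_tsub_eq_topSum_add_choose (N := N) (r := r) (by omega),
      pow_add] at h
    exact_mod_cast h
  have hgauss := subsetPowSum_le N (N - r)
  have hpos : (0 : ℝ) < 2 ^ topSum N (N - r) := by positivity
  refine le_of_mul_le_mul_left ?_ hpos
  calc (2 : ℝ) ^ topSum N (N - r) * 2 ^ (r + 1).choose 2
      ≤ (r + 1).factorial * M * subsetPowSum N (N - r) := by linarith
    _ ≤ (r + 1).factorial * M * (4 * 2 ^ topSum N (N - r)) := by gcongr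
    _ = 2 ^ topSum N (N - r) * (4 * (r + 1).factorial * M) := by ring

end Counting

end MonochromaticCliqueCount

theorem stmt_10 (t : ℕ) (ht : 2 ≤ t)
    (c : Fin (2 ^ (2 * t - 3)) → Fin (2 ^ (2 * t - 3)) → Bool)
    (hsym : ∀ i j, c i j = c j i) :
    ((Finset.univ.filter (fun S : Finset (Fin (2 ^ (2 * t - 3))) =>
        S.card = t ∧ ∃ b, ∀ i ∈ S, ∀ j ∈ S, i ≠ j → c i j = b)).card : ℝ)
      ≥ (1 / (Nat.factorial t : ℝ)) * (2 : ℝ) ^ ((t.choose 2 : ℤ) - 2) := by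
  obtain ⟨r, rfl⟩ : ∃ r, t = r + 1 := ⟨t - 1, by omega⟩
  have h : (2 : ℝ) ^ (r + 1).choose 2 ≤ 4 * (r + 1).factorial *
      #(Finset.univ.filter (fun S : Finset (Fin (2 ^ (2 * (r + 1) - 3))) =>
        S.card = r + 1 ∧ ∃ b, ∀ i ∈ S, ∀ j ∈ S, i ≠ j → c i j = b)) := by
    -- `convert` reconciles the `DecidableEq` instance of `Fin` with the one of its linear order.
    convert MonochromaticCliqueCount.two_pow_choose_le_card_monochromatic (r := r)
      (Fintype.card_fin _) hsym (by omega) using 5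
  have hfac : (0 : ℝ) < (r + 1).factorial := by positivity
  have hpow : (2 : ℝ) ^ (((r + 1).choose 2 : ℕ) - 2 : ℤ) = 2 ^ (r + 1).choose 2 / 4 := by
    rw [zpow_sub₀ two_ne_zero, zpow_natCast]
    norm_num
  rw [ge_iff_le, hpow, one_div_mul_eq_div, div_le_iff₀ hfac]
  linarith
end

section
/- For every natural number n and every natural number k with 2 ≤ k ≤ (1/2)·log₂ n, any red/blue coloring of the edges of the complete graph on n vertices contains at least 2^((−3k² + 5k − 4)/2) · C(n, k) monochromatic cliques of size k. -/
/-!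
Averaging over the sets of `2 ^ (2k)` vertices, of which every `k`-set lies in equally many,
it suffices to find `2 ^ ((-3k² + 5k - 4) / 2) * C(2 ^ (2k), k)` monochromatic `k`-cliques
inside a set `B` of `2 ^ T` vertices, `T ≥ 2k - 3`.

Inside `B` run the Erdős–Szekeres greedy process: from the current set `A` pick a vertex `v` and
keep half of `A \ {v}`, all joined to `v` in its majority colour. Along a run of `2k - 2` steps
each chosen vertex sends one colour to all later ones, so `k - 1` of the first `2k - 3` sending
the same colour, together with the last one, form a monochromatic `k`-clique. There are
`∏_{i < 2k-2} 2 ^ (T - i)` runs, and a fixed `k`-set occurs in at most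
`k! * ∑_{|Q| = k} ∏_{i ∉ Q} 2 ^ (T - i)` of them. As the weights halve at each step, this sum is
at most `∏_{i ≥ 1} (1 - 2⁻ⁱ)⁻¹ ≤ 4` times its largest term, the one with `Q` the last `k` steps,
and comparing the two counts gives the bound.
-/

open Finset
open scoped Nat

namespace RamseyMultiplicity

theorem two_pow_le_of_le_logb {m n : ℕ} (hm : 0 < m) (h : (m : ℝ) ≤ Real.logb 2 n) : 2 ^ m ≤ n := by
  have hn : (0 : ℝ) < n := by
    rcases Nat.eq_zero_or_pos n with rfl | hn
    · rw [Nat.cast_zero, Real.logb_zero] at h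
      exact absurd h (not_le.2 (Nat.cast_pos.2 hm))
    · exact_mod_cast hn
  rw [Real.le_logb_iff_rpow_le one_lt_two hn, Real.rpow_natCast] at h
  exact_mod_cast h

theorem mul_choose_le_card_of_forall_subset {α : Type*} [Fintype α] [DecidableEq α]
    {M : Finset (Finset α)} {k N : ℕ} (hM : ∀ S ∈ M, #S = k) (hkN : k ≤ N)
    (hN : N ≤ Fintype.card α) {ρ : ℝ}
    (hρ : ∀ B : Finset α, #B = N → ρ * N.choose k ≤ #{S ∈ M | S ⊆ B}) :
    ρ * (Fintype.card α).choose k ≤ #M := by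
  have hsupersets : ∀ S ∈ M, #((powersetCard N univ).bipartiteBelow (fun B S => S ⊆ B) S)
      ≤ (Fintype.card α - k).choose (N - k) := fun S hS => by
    rw [bipartiteBelow, card_filter_powersetCard_subset _ _ _ (subset_univ S) (hM S hS ▸ hkN),
      card_univ, hM S hS]
  have hcount := card_nsmul_le_card_nsmul (R := ℝ) (s := powersetCard N univ) (t := M)
    (fun B S => S ⊆ B) (m := ρ * N.choose k) (n := ((Fintype.card α - k).choose (N - k) : ℕ))
    (fun B hB => hρ B (mem_powersetCard.1 hB).2) (fun S hS => by exact_mod_cast hsupersets S hS)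
  rw [card_powersetCard, card_univ, nsmul_eq_mul, nsmul_eq_mul] at hcount
  have hchoose : ((Fintype.card α).choose N : ℝ) * N.choose k
      = (Fintype.card α).choose k * (Fintype.card α - k).choose (N - k) := by
    exact_mod_cast Nat.choose_mul hkN
  refine le_of_mul_le_mul_right ?_
    (by exact_mod_cast Nat.choose_pos (by omega) : (0 : ℝ) < (Fintype.card α - k).choose (N - k))
  calc ρ * (Fintype.card α).choose k * (Fintype.card α - k).choose (N - k)
      = ((Fintype.card α).choose N : ℝ) * (ρ * N.choose k) := by rw [mul_assoc, ← hchoose]; ring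
    _ ≤ _ := hcount

section AdmissibleLists

variable {α : Type*} (ext : List α → Finset α)

def IsAdmissible : List α → Prop
  | [] => True
  | v :: l => v ∈ ext l ∧ IsAdmissible l

variable [DecidableEq α]

def admissibleLists : ℕ → Finset (List α)
  | 0 => {[]}
  | j + 1 => (admissibleLists j).biUnion fun l => (ext l).image (· :: l)

variable {ext}

theorem mem_admissibleLists {j : ℕ} {l : List α} :
    l ∈ admissibleLists ext j ↔ l.length = j ∧ IsAdmissible ext l := by
  induction j generalizing l with
  | zero => cases l <;> simp [admissibleLists, IsAdmissible]
  | succ j ih =>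
    cases l with
    | nil => simp [admissibleLists]
    | cons v l => simp [admissibleLists, IsAdmissible, ih]; tauto

theorem card_admissibleLists (a : ℕ → ℕ) {j : ℕ}
    (ha : ∀ l, IsAdmissible ext l → l.length < j → #(ext l) = a l.length) :
    #(admissibleLists ext j) = ∏ i ∈ range j, a i := by
  induction j with
  | zero => simp [admissibleLists]
  | succ j ih =>
    have hdisj : (admissibleLists ext j : Set (List α)).PairwiseDisjoint
        fun l => (ext l).image (· :: l) := by
      intro l _ l' _ hne
      simp only [Function.onFun, disjoint_left, mem_image]
      rintro _ ⟨v, -, rfl⟩ ⟨v', -, h⟩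
      exact hne (List.cons_eq_cons.1 h).2.symm
    have hcard : ∀ l ∈ admissibleLists ext j, #((ext l).image (· :: l)) = a j := fun l hl => by
      obtain ⟨hlen, hadm⟩ := mem_admissibleLists.1 hl
      rw [card_image_of_injective _ (fun v w h => (List.cons_eq_cons.1 h).1), ha l hadm (by omega),
        hlen]
    rw [admissibleLists, card_biUnion hdisj, sum_congr rfl hcard, sum_const, smul_eq_mul,
      ih (fun l hl hlt => ha l hl (by omega)), prod_range_succ]

-- `reservedFillings a j r = ∑ Q ⊆ range j with #Q = r, ∏ i ∈ range j \ Q, a i`: the ways to fill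
-- `j` slots when `r` of them are reserved and slot `i` otherwise takes one of `a i` values.
def reservedFillings (a : ℕ → ℕ) : ℕ → ℕ → ℕ
  | 0, 0 => 1
  | 0, _ + 1 => 0
  | j + 1, 0 => a j * reservedFillings a j 0
  | j + 1, r + 1 => a j * reservedFillings a j (r + 1) + reservedFillings a j r

theorem reservedFillings_zero (a : ℕ → ℕ) (j : ℕ) :
    reservedFillings a j 0 = ∏ i ∈ range j, a i := by
  induction j with
  | zero => rfl
  | succ j ih => rw [reservedFillings, ih, prod_range_succ, mul_comm]

theorem reservedFillings_eq_zero (a : ℕ → ℕ) {j r : ℕ} (h : j < r) :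
    reservedFillings a j r = 0 := by
  induction j generalizing r with
  | zero => obtain ⟨r, rfl⟩ := Nat.exists_eq_succ_of_ne_zero (by omega : r ≠ 0); rfl
  | succ j ih =>
    obtain ⟨r, rfl⟩ := Nat.exists_eq_succ_of_ne_zero (by omega : r ≠ 0)
    rw [reservedFillings, ih (by omega), ih (by omega), mul_zero]

theorem card_filter_subset_insert_le {X : Finset α} {m : ℕ} (hX : #X ≤ m)
    (s L : Finset α) :
    #{v ∈ X | s ⊆ insert v L} ≤ (if s ⊆ L then m else 0) + #{v ∈ s | s.erase v ⊆ L} := by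
  split_ifs with hsL
  · exact le_add_right ((card_filter_le _ _).trans hX)
  · refine (card_le_card fun v hv => ?_).trans (le_add_left le_rfl)
    rw [mem_filter] at hv ⊢
    have hvs : v ∈ s := by
      by_contra hvs
      exact hsL ((subset_insert_iff_of_notMem hvs).1 hv.2)
    exact ⟨hvs, subset_insert_iff.1 hv.2⟩

theorem card_filter_subset_toFinset_le (a : ℕ → ℕ) {j : ℕ}
    (ha : ∀ l, IsAdmissible ext l → l.length < j → #(ext l) ≤ a l.length) (s : Finset α) :
    #{l ∈ admissibleLists ext j | s ⊆ l.toFinset} ≤ (#s)! * reservedFillings a j #s := by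
  induction j generalizing s with
  | zero =>
    obtain rfl | hs := s.eq_empty_or_nonempty
    · simp [admissibleLists, reservedFillings]
    · have hsub : ¬ s ⊆ ([] : List α).toFinset := by simpa using hs.ne_empty
      simp only [admissibleLists, filter_singleton, if_neg hsub, card_empty]
      exact Nat.zero_le _
  | succ j ih =>
    have ih' := fun s => ih (fun l hl hlt => ha l hl (by omega)) s
    have hext : ∀ l ∈ admissibleLists ext j, #(ext l) ≤ a j := fun l hl => by
      obtain ⟨hlen, hadm⟩ := mem_admissibleLists.1 hl
      exact hlen ▸ ha l hadm (by omega)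
    calc #{l ∈ admissibleLists ext (j + 1) | s ⊆ l.toFinset}
        ≤ ∑ l ∈ admissibleLists ext j, #{v ∈ ext l | s ⊆ insert v l.toFinset} := by
          rw [admissibleLists, filter_biUnion]
          refine card_biUnion_le.trans (sum_le_sum fun l _ => ?_)
          simp only [filter_image, List.toFinset_cons]
          exact card_image_le
      _ ≤ ∑ l ∈ admissibleLists ext j,
            ((if s ⊆ l.toFinset then a j else 0) + #{v ∈ s | s.erase v ⊆ l.toFinset}) :=
          sum_le_sum fun l hl => card_filter_subset_insert_le (hext l hl) _ _
      _ = a j * #{l ∈ admissibleLists ext j | s ⊆ l.toFinset}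
            + ∑ v ∈ s, #{l ∈ admissibleLists ext j | s.erase v ⊆ l.toFinset} := by
          rw [sum_add_distrib, ← sum_filter, sum_const, smul_eq_mul, mul_comm]
          congr 1
          simp only [card_filter]
          exact sum_comm
      _ ≤ a j * ((#s)! * reservedFillings a j #s)
            + ∑ v ∈ s, (#s - 1)! * reservedFillings a j (#s - 1) := by
          refine add_le_add (Nat.mul_le_mul_left _ (ih' s)) (sum_le_sum fun v hv => ?_)
          simpa [card_erase_of_mem hv] using ih' (s.erase v)
      _ = (#s)! * reservedFillings a (j + 1) #s := by
          rcases hs : #s with _ | r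
          · rw [card_eq_zero.1 hs, sum_empty]
            simp only [reservedFillings, Nat.factorial_zero]
            ring
          · rw [sum_const, hs, smul_eq_mul, Nat.add_sub_cancel, reservedFillings,
              Nat.factorial_succ]
            ring

end AdmissibleLists

noncomputable def halvingProd (r : ℕ) : ℝ := ∏ i ∈ range r, (1 - 2⁻¹ ^ (i + 1))

@[simp]
theorem halvingProd_zero : halvingProd 0 = 1 := prod_range_zero _

theorem halvingProd_succ (r : ℕ) : halvingProd (r + 1) = halvingProd r * (1 - 2⁻¹ ^ (r + 1)) :=
  prod_range_succ _ _

theorem one_sub_inv_two_pow_nonneg (r : ℕ) : (0 : ℝ) ≤ 1 - 2⁻¹ ^ r :=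
  sub_nonneg.2 (pow_le_one₀ (by norm_num) (by norm_num))

theorem halvingProd_nonneg (r : ℕ) : 0 ≤ halvingProd r :=
  prod_nonneg fun i _ => one_sub_inv_two_pow_nonneg (i + 1)

theorem halvingProd_succ_le (r : ℕ) : halvingProd (r + 1) ≤ halvingProd r := by
  rw [halvingProd_succ]
  exact mul_le_of_le_one_right (halvingProd_nonneg r) (sub_le_self _ (by positivity))

theorem quarter_add_le_halvingProd (r : ℕ) : 1 / 4 + (2⁻¹ : ℝ) ^ (r + 1) ≤ halvingProd r := by
  induction r with
  | zero => norm_num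
  | succ r ih =>
    rw [halvingProd_succ]
    rcases Nat.eq_zero_or_pos r with rfl | hr
    · norm_num
    · have hy : (2⁻¹ : ℝ) ^ (r + 1) ≤ 2⁻¹ ^ 2 :=
        pow_le_pow_of_le_one (by norm_num) (by norm_num) (by omega)
      have hy0 : (0 : ℝ) ≤ 2⁻¹ ^ (r + 1) := by positivity
      rw [pow_succ _ (r + 1)]
      nlinarith

-- Since the weights halve from slot to slot, the sum defining `reservedFillings` is at most
-- `(halvingProd r)⁻¹` times its largest term, the one reserving the last `r` slots.
theorem halvingProd_mul_reservedFillings_le {T j : ℕ} (hj : j ≤ T + 1) (r : ℕ) :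
    halvingProd r * reservedFillings (fun i => 2 ^ (T - i)) j r
      ≤ ∏ i ∈ range (j - r), (2 : ℝ) ^ (T - i) := by
  induction j generalizing r with
  | zero => cases r <;> simp [reservedFillings]
  | succ j ih =>
    replace ih := ih (by omega)
    rcases r with _ | r
    · simp [reservedFillings_zero]
    rcases Nat.lt_or_ge j (r + 1) with hjr | hrj
    · rw [reservedFillings, reservedFillings_eq_zero _ hjr, mul_zero, zero_add,
        show j + 1 - (r + 1) = j - r by omega]
      exact (mul_le_mul_of_nonneg_right (halvingProd_succ_le r) (Nat.cast_nonneg _)).trans (ih r)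
    obtain ⟨m, rfl⟩ : ∃ m, j = m + r + 1 := ⟨j - (r + 1), by omega⟩
    have hX := ih (r + 1)
    have hZ := ih r
    rw [show m + r + 1 - (r + 1) = m by omega, halvingProd_succ] at hX
    rw [show m + r + 1 - r = m + 1 by omega, prod_range_succ] at hZ
    have hpow : (2 : ℝ) ^ (T - (m + r + 1)) * 2 ^ (r + 1) = 2 ^ (T - m) := by
      rw [← pow_add]
      congr 1
      omega
    rw [← hpow] at hZ
    rw [reservedFillings, show m + r + 1 + 1 - (r + 1) = m + 1 by omega, prod_range_succ, ← hpow,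
      halvingProd_succ]
    push_cast
    set A : ℝ := 2 ^ (T - (m + r + 1))
    set y : ℝ := 2⁻¹ ^ (r + 1)
    set F := reservedFillings (fun i => 2 ^ (T - i)) (m + r + 1)
    set Q := ∏ i ∈ range m, (2 : ℝ) ^ (T - i)
    have hy : Q * A * (y * 2 ^ (r + 1)) = Q * A := by
      rw [← mul_pow, inv_mul_cancel₀ two_ne_zero, one_pow, mul_one]
    calc halvingProd r * (1 - y) * (A * F (r + 1) + F r)
        = A * (halvingProd r * (1 - y) * F (r + 1)) + (1 - y) * (halvingProd r * F r) := by ring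
      _ ≤ A * Q + (1 - y) * (Q * (A * 2 ^ (r + 1))) :=
        add_le_add (mul_le_mul_of_nonneg_left hX (by positivity))
          (mul_le_mul_of_nonneg_left hZ (one_sub_inv_two_pow_nonneg (r + 1)))
      _ = Q * (A * 2 ^ (r + 1)) := by linear_combination -hy

theorem prod_Ico_two_pow_sub {k T : ℕ} (hk : 2 ≤ k) (hT : 2 * k - 3 ≤ T) :
    ∏ i ∈ Ico (k - 2) (2 * k - 2), (2 : ℝ) ^ (T - i)
      = 4 * 2 ^ ((-3 * (k : ℝ) ^ 2 + 5 * k - 4) / 2) * 2 ^ (T * k) := by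
  obtain ⟨m, rfl⟩ : ∃ m, k = m + 2 := ⟨k - 2, by omega⟩
  rw [show m + 2 - 2 = m by omega, show 2 * (m + 2) - 2 = 2 * m + 2 by omega]
  have hsplit : ∑ i ∈ Ico m (2 * m + 2), (T - i) + ∑ i ∈ Ico m (2 * m + 2), i = T * (m + 2) := by
    rw [← sum_add_distrib, sum_congr rfl fun i hi => Nat.sub_add_cancel (by simp at hi; omega),
      sum_const, Nat.card_Ico, smul_eq_mul, show 2 * m + 2 - m = m + 2 by omega, mul_comm]
  have hgauss : (∑ i ∈ Ico m (2 * m + 2), i) * 2 = (m + 2) * (3 * m + 1) := by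
    rw [sum_Ico_eq_sum_range, show 2 * m + 2 - m = m + 2 by omega, sum_add_distrib, sum_const,
      card_range, smul_eq_mul, add_mul, sum_range_id_mul_two, show m + 2 - 1 = m + 1 by omega]
    ring
  have hexp : ((∑ i ∈ Ico m (2 * m + 2), (T - i) : ℕ) : ℝ)
      = 2 + (-3 * ((m + 2 : ℕ) : ℝ) ^ 2 + 5 * (m + 2 : ℕ) - 4) / 2 + (T * (m + 2) : ℕ) := by
    have h1 : ((∑ i ∈ Ico m (2 * m + 2), (T - i) : ℕ) : ℝ) + ((∑ i ∈ Ico m (2 * m + 2), i : ℕ) : ℝ)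
        = (T * (m + 2) : ℕ) := by exact_mod_cast hsplit
    have h2 : ((∑ i ∈ Ico m (2 * m + 2), i : ℕ) : ℝ) * 2 = (m + 2) * (3 * m + 1) := by
      exact_mod_cast hgauss
    push_cast at h1 h2 ⊢
    linarith
  rw [prod_pow_eq_pow_sum, ← Real.rpow_natCast, hexp, Real.rpow_add two_pos, Real.rpow_add two_pos,
    Real.rpow_natCast, Real.rpow_two]
  norm_num

section Colorings

variable {α : Type*} (c : α → α → Bool)

def IsMonochromatic (S : Finset α) : Prop :=
  ∃ b, ∀ i ∈ S, ∀ j ∈ S, i ≠ j → c i j = b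

theorem exists_length_le_two_mul_countP {β : Type*} (L : List β) (f : β → Bool) :
    ∃ b, L.length ≤ 2 * L.countP (f · == b) := by
  have hsplit := L.length_eq_countP_add_countP (f · == true)
  simp only [beq_true, Bool.not_eq_true, Bool.decide_eq_false] at hsplit
  by_cases h : L.length ≤ 2 * L.countP (f · == true)
  · exact ⟨true, h⟩
  · refine ⟨false, ?_⟩
    simp only [beq_true, beq_false] at h ⊢
    omega

variable [DecidableEq α]

instance (S : Finset α) : Decidable (IsMonochromatic c S) := by
  unfold IsMonochromatic
  infer_instance

theorem exists_monochromatic_of_pairwise (hsym : ∀ i j, c i j = c j i) {k : ℕ} (hk : 0 < k)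
    {v : α} {b₀ : Bool} {L : List (α × Bool)}
    (hL : ((v, b₀) :: L).Pairwise fun q p => c p.1 q.1 = p.2 ∧ p.1 ≠ q.1)
    (hlen : L.length = 2 * k - 3) :
    ∃ S ⊆ insert v (L.map Prod.fst).toFinset, #S = k ∧ IsMonochromatic c S := by
  obtain ⟨b, hb⟩ := exists_length_le_two_mul_countP L Prod.snd
  set L' := (L.filter (·.2 == b)).take (k - 1)
  have hsub : L'.Sublist L := (List.take_sublist _ _).trans List.filter_sublist
  have hlabel : ∀ p ∈ L', p.2 = b := fun p hp => by
    simpa using (List.mem_filter.1 (List.mem_of_mem_take hp)).2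
  have hlenL' : L'.length = k - 1 := by
    rw [List.length_take, ← List.countP_eq_length_filter]
    omega
  obtain ⟨hhead, htail⟩ := List.pairwise_cons.1 (hL.sublist (hsub.cons_cons _))
  set V := v :: L'.map Prod.fst
  have hVcolor : V.Pairwise fun x y => c x y = b := by
    refine List.pairwise_cons.2 ⟨?_, List.pairwise_map.2 (htail.imp_of_mem ?_)⟩
    · simp only [List.mem_map]
      rintro _ ⟨p, hp, rfl⟩
      rw [hsym, (hhead p hp).1, hlabel p hp]
    · intro q p _ hp h
      rw [hsym, h.1, hlabel p hp]
  have hVnodup : V.Nodup := by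
    refine List.pairwise_cons.2 ⟨?_, List.pairwise_map.2 (htail.imp fun h => h.2.symm)⟩
    simp only [List.mem_map]
    rintro _ ⟨p, hp, rfl⟩
    exact (hhead p hp).2.symm
  refine ⟨V.toFinset, ?_, ?_, b, ?_⟩
  · rw [List.toFinset_cons]
    exact insert_subset_insert _ fun x hx =>
      List.mem_toFinset.2 ((hsub.map _).subset (List.mem_toFinset.1 hx))
  · rw [List.toFinset_card_of_nodup hVnodup, List.length_cons, List.length_map, hlenL']
    omega
  · have : Std.Symm fun x y => c x y = b := ⟨fun x y h => (hsym y x).trans h⟩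
    intro i hi j hj hij
    exact hVcolor.forall (List.mem_toFinset.1 hi) (List.mem_toFinset.1 hj) hij

def majorityColor (A : Finset α) (v : α) : Bool :=
  decide (#(A.erase v) ≤ 2 * #{w ∈ A.erase v | c v w})

def majorityNeighbors (A : Finset α) (v : α) : Finset α :=
  {w ∈ A.erase v | c v w = majorityColor c A v}

theorem card_div_two_le_card_majorityNeighbors (A : Finset α) (v : α) :
    #A / 2 ≤ #(majorityNeighbors c A v) := by
  have hsplit := card_filter_add_card_filter_not (s := A.erase v) (fun w => c v w = true)
  have herase : #A - 1 ≤ #(A.erase v) := pred_card_le_card_erase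
  simp only [Bool.not_eq_true] at hsplit
  unfold majorityNeighbors majorityColor
  by_cases h : #(A.erase v) ≤ 2 * #{w ∈ A.erase v | c v w}
  · simp only [h, decide_true]
    omega
  · simp only [h, decide_false]
    omega

-- Keeping exactly `#A / 2` vertices makes the number of runs an exact product.
noncomputable def greedyStep (A : Finset α) (v : α) : Finset α :=
  (exists_subset_card_eq (card_div_two_le_card_majorityNeighbors c A v)).choose

theorem greedyStep_subset (A : Finset α) (v : α) : greedyStep c A v ⊆ majorityNeighbors c A v :=
  (exists_subset_card_eq (card_div_two_le_card_majorityNeighbors c A v)).choose_spec.1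

theorem card_greedyStep (A : Finset α) (v : α) : #(greedyStep c A v) = #A / 2 :=
  (exists_subset_card_eq (card_div_two_le_card_majorityNeighbors c A v)).choose_spec.2

variable (B : Finset α)

noncomputable def greedySet : List α → Finset α
  | [] => B
  | v :: l => greedyStep c (greedySet l) v

noncomputable def withColors : List α → List (α × Bool)
  | [] => []
  | v :: l => (v, majorityColor c (greedySet c B l) v) :: withColors l

theorem map_fst_withColors : ∀ l : List α, (withColors c B l).map Prod.fst = l
  | [] => rfl
  | v :: l => congrArg (v :: ·) (map_fst_withColors l)

theorem greedySet_subset : ∀ l : List α, greedySet c B l ⊆ B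
  | [] => subset_rfl
  | v :: l => (greedyStep_subset c _ v).trans <| (filter_subset _ _).trans <|
      (erase_subset _ _).trans (greedySet_subset l)

theorem card_greedySet {T : ℕ} (hB : #B = 2 ^ T) :
    ∀ l : List α, l.length ≤ T → #(greedySet c B l) = 2 ^ (T - l.length)
  | [], _ => hB
  | v :: l, hl => by
    rw [greedySet, card_greedyStep, card_greedySet hB l (by simp at hl; omega), List.length_cons,
      show T - l.length = T - (l.length + 1) + 1 by simp at hl; omega, pow_succ,
      Nat.mul_div_cancel _ two_pos]

theorem color_eq_of_mem_greedySet : ∀ l : List α, ∀ p ∈ withColors c B l, ∀ w ∈ greedySet c B l,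
    c p.1 w = p.2 ∧ p.1 ≠ w
  | [], _, hp, _, _ => by simp [withColors] at hp
  | v :: l, p, hp, w, hw => by
    have hw' := greedyStep_subset c _ v hw
    simp only [majorityNeighbors, mem_filter, mem_erase] at hw'
    rcases List.mem_cons.1 hp with rfl | hp
    · exact ⟨hw'.2, hw'.1.1.symm⟩
    · exact color_eq_of_mem_greedySet l p hp w hw'.1.2

-- Lists are newest first: each chosen vertex sends its recorded colour to every vertex chosen
-- after it, i.e. standing before it in the list.
theorem pairwise_withColors : ∀ {l : List α}, IsAdmissible (greedySet c B) l →
    (withColors c B l).Pairwise fun q p => c p.1 q.1 = p.2 ∧ p.1 ≠ q.1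
  | [], _ => List.Pairwise.nil
  | v :: l, ⟨hv, hl⟩ => List.pairwise_cons.2
      ⟨fun p hp => color_eq_of_mem_greedySet c B l p hp v hv, pairwise_withColors hl⟩

theorem toFinset_subset_of_isAdmissible : ∀ {l : List α}, IsAdmissible (greedySet c B) l →
    l.toFinset ⊆ B
  | [], _ => by simp
  | v :: l, ⟨hv, hl⟩ => by
    rw [List.toFinset_cons]
    exact insert_subset (greedySet_subset c B l hv) (toFinset_subset_of_isAdmissible hl)

theorem exists_monochromatic_subset_of_mem_admissibleLists (hsym : ∀ i j, c i j = c j i)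
    {k : ℕ} (hk : 2 ≤ k) {l : List α} (hl : l ∈ admissibleLists (greedySet c B) (2 * k - 2)) :
    ∃ S ∈ {S ∈ B.powersetCard k | IsMonochromatic c S}, S ⊆ l.toFinset := by
  obtain ⟨hlen, hadm⟩ := mem_admissibleLists.1 hl
  obtain ⟨v, l, rfl⟩ := List.exists_cons_of_length_pos (by omega : 0 < l.length)
  have hP := pairwise_withColors c B hadm
  rw [withColors] at hP
  have hlen' : (withColors c B l).length = 2 * k - 3 := by
    rw [← List.length_map (f := Prod.fst), map_fst_withColors]
    simp at hlen
    omega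
  obtain ⟨S, hS, hcard, hmono⟩ := exists_monochromatic_of_pairwise c hsym (by omega) hP hlen'
  rw [map_fst_withColors, ← List.toFinset_cons] at hS
  exact ⟨S, mem_filter.2 ⟨mem_powersetCard.2 ⟨hS.trans (toFinset_subset_of_isAdmissible c B hadm),
    hcard⟩, hmono⟩, hS⟩

theorem prod_le_card_monochromatic_mul (hsym : ∀ i j, c i j = c j i) {k T : ℕ} (hk : 2 ≤ k)
    (hB : #B = 2 ^ T) (hT : 2 * k - 3 ≤ T) :
    ∏ i ∈ range (2 * k - 2), 2 ^ (T - i) ≤ #{S ∈ B.powersetCard k | IsMonochromatic c S}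
      * (k ! * reservedFillings (fun i => 2 ^ (T - i)) (2 * k - 2) k) := by
  rw [← card_admissibleLists _ fun l _ hl => card_greedySet c B hB l (by omega), ← mul_one #_]
  refine card_mul_le_card_mul (fun l S => S ⊆ l.toFinset) (fun l hl => ?_) (fun S hS => ?_)
  · obtain ⟨S, hS, hsub⟩ := exists_monochromatic_subset_of_mem_admissibleLists c B hsym hk hl
    exact card_pos.2 ⟨S, (mem_bipartiteAbove _).2 ⟨hS, hsub⟩⟩
  · have hcard := (mem_powersetCard.1 (mem_filter.1 hS).1).2
    have hfibre := card_filter_subset_toFinset_le (ext := greedySet c B) (j := 2 * k - 2)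
      (fun i => 2 ^ (T - i))
      (fun l _ hl => (card_greedySet c B hB l (by omega)).le) S
    rw [hcard] at hfibre
    exact hfibre

theorem prod_Ico_mul_halvingProd_le (hsym : ∀ i j, c i j = c j i) {k T : ℕ} (hk : 2 ≤ k)
    (hB : #B = 2 ^ T) (hT : 2 * k - 3 ≤ T) :
    (∏ i ∈ Ico (k - 2) (2 * k - 2), (2 : ℝ) ^ (T - i)) * halvingProd k
      ≤ #{S ∈ B.powersetCard k | IsMonochromatic c S} * k ! := by
  set M : ℝ := ((#{S ∈ B.powersetCard k | IsMonochromatic c S} : ℕ) : ℝ)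
  set R : ℝ := ((reservedFillings (fun i => 2 ^ (T - i)) (2 * k - 2) k : ℕ) : ℝ)
  set P : ℝ := ∏ i ∈ range (k - 2), (2 : ℝ) ^ (T - i)
  set Q : ℝ := ∏ i ∈ Ico (k - 2) (2 * k - 2), (2 : ℝ) ^ (T - i)
  have hcount : P * Q ≤ M * (k ! * R) := by
    have h := Nat.cast_le (α := ℝ).2 (prod_le_card_monochromatic_mul c B hsym hk hB hT)
    push_cast at h
    rwa [← prod_range_mul_prod_Ico _ (show k - 2 ≤ 2 * k - 2 by omega)] at h
  have hR : halvingProd k * R ≤ P := by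
    simpa [show 2 * k - 2 - k = k - 2 by omega] using
      halvingProd_mul_reservedFillings_le (T := T) (j := 2 * k - 2) (by omega) k
  refine le_of_mul_le_mul_left ?_ (by positivity : 0 < P)
  calc P * (Q * halvingProd k) = P * Q * halvingProd k := by ring
    _ ≤ M * (k ! * R) * halvingProd k := mul_le_mul_of_nonneg_right hcount (halvingProd_nonneg k)
    _ = M * k ! * (halvingProd k * R) := by ring
    _ ≤ M * k ! * P := mul_le_mul_of_nonneg_left hR (by positivity)
    _ = P * (M * k !) := by ring

theorem mul_choose_le_card_monochromatic (hsym : ∀ i j, c i j = c j i) {k T : ℕ} (hk : 2 ≤ k)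
    (hB : #B = 2 ^ T) (hT : 2 * k - 3 ≤ T) :
    (2 : ℝ) ^ ((-3 * (k : ℝ) ^ 2 + 5 * k - 4) / 2) * (2 ^ T).choose k
      ≤ #{S ∈ B.powersetCard k | IsMonochromatic c S} := by
  set E : ℝ := 2 ^ ((-3 * (k : ℝ) ^ 2 + 5 * k - 4) / 2)
  have hchoose : ((2 ^ T).choose k : ℝ) * k ! ≤ 2 ^ (T * k) := by
    have h := Nat.choose_le_pow_div (α := ℝ) k (2 ^ T)
    rw [le_div_iff₀ (by positivity)] at h
    push_cast at h
    rwa [← pow_mul] at h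
  have hquarter : 1 / 4 ≤ halvingProd k :=
    (le_add_of_nonneg_right (by positivity)).trans (quarter_add_le_halvingProd k)
  have hE : 0 ≤ E * 2 ^ (T * k) := by positivity
  refine le_of_mul_le_mul_right ?_ (by positivity : (0 : ℝ) < k !)
  calc E * (2 ^ T).choose k * k ! ≤ E * 2 ^ (T * k) := by
        rw [mul_assoc]
        exact mul_le_mul_of_nonneg_left hchoose (by positivity)
    _ ≤ 4 * E * 2 ^ (T * k) * halvingProd k := by nlinarith
    _ = (∏ i ∈ Ico (k - 2) (2 * k - 2), (2 : ℝ) ^ (T - i)) * halvingProd k := by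
        rw [prod_Ico_two_pow_sub hk hT]
    _ ≤ _ := prod_Ico_mul_halvingProd_le c B hsym hk hB hT

end Colorings

end RamseyMultiplicity

theorem stmt_11 (n k : ℕ) (hk2 : 2 ≤ k) (hk : (k : ℝ) ≤ Real.logb 2 n / 2)
    (c : Fin n → Fin n → Bool) (hsym : ∀ i j, c i j = c j i) :
    ((Finset.univ.filter (fun S : Finset (Fin n) =>
        S.card = k ∧ ∃ b, ∀ i ∈ S, ∀ j ∈ S, i ≠ j → c i j = b)).card : ℝ)
      ≥ (2 : ℝ) ^ ((-3 * (k : ℝ) ^ 2 + 5 * k - 4) / 2) * (n.choose k : ℕ) := by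
  have hn : 2 ^ (2 * k) ≤ n :=
    RamseyMultiplicity.two_pow_le_of_le_logb (by omega) (by push_cast; linarith)
  have hkN : k ≤ 2 ^ (2 * k) :=
    Nat.lt_two_pow_self.le.trans (Nat.pow_le_pow_right two_pos (by omega))
  have hcount := RamseyMultiplicity.mul_choose_le_card_of_forall_subset
    (M := univ.filter fun S : Finset (Fin n) =>
      S.card = k ∧ ∃ b, ∀ i ∈ S, ∀ j ∈ S, i ≠ j → c i j = b)
    (fun S hS => (mem_filter.1 hS).2.1) hkN (by simpa using hn) fun B hB =>
      (RamseyMultiplicity.mul_choose_le_card_monochromatic c B hsym hk2 hB (by omega)).trans <|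
        Nat.cast_le.2 <| card_le_card fun S hS => by
          rw [mem_filter, mem_powersetCard] at hS
          exact mem_filter.2 ⟨mem_filter.2 ⟨mem_univ _, hS.1.2, hS.2⟩, hS.1.1⟩
  rwa [Fintype.card_fin] at hcount
end

section
/- Let G be a 2-coloring of the edges of a complete graph that contains no monochromatic clique of size t, and let k < t. Then the number of monochromatic cliques of size k in G is at most (2/k!)·∏_{r=0}^{k−1} C(2t−2−r, t−1). -/
/-!
Double counting over cliques. A colour-`b` clique `S` with `r` vertices extends to a colour-`b`
clique with `r + 1` vertices only by a vertex of its colour-`b` common neighbourhood. That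
neighbourhood contains no colour-`b` clique of size `t - r` (together with `S` it would form one of
size `t`) and no clique of the other colour of size `t`, so by the Erdős–Szekeres bound it has fewer
than `C(2t-2-r, t-1)` vertices. As every `(r+1)`-clique contains `r + 1` cliques of size `r`, this
gives `(r + 1) · #(r+1)-cliques ≤ C(2t-2-r, t-1) · #r-cliques`; iterating from `r = 0` and adding
up the two colours proves the bound.
-/

open Finset
open scoped Nat

section

variable {V : Type*}

def IsMonoClique (c : V → V → Bool) (b : Bool) (S : Finset V) : Prop :=
  (S : Set V).Pairwise fun i j => c i j = b

instance [DecidableEq V] (c : V → V → Bool) (b : Bool) : DecidablePred (IsMonoClique c b) :=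
  fun S => inferInstanceAs (Decidable ((S : Set V).Pairwise fun i j => c i j = b))

def commonNbhd [DecidableEq V] (c : V → V → Bool) (b : Bool) (A S : Finset V) : Finset V :=
  A.filter fun v => v ∉ S ∧ ∀ u ∈ S, c v u = b

def monoCliques [Fintype V] [DecidableEq V] (c : V → V → Bool) (b : Bool) (k : ℕ) :
    Finset (Finset V) :=
  univ.filter fun S => #S = k ∧ IsMonoClique c b S

section

variable {c : V → V → Bool} {b : Bool} {S T A : Finset V}

@[simp]
theorem mem_commonNbhd [DecidableEq V] {v : V} :
    v ∈ commonNbhd c b A S ↔ v ∈ A ∧ v ∉ S ∧ ∀ u ∈ S, c v u = b :=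
  mem_filter

theorem isMonoClique_singleton (v : V) : IsMonoClique c b {v} := by
  simp [IsMonoClique]

theorem IsMonoClique.mono (hT : IsMonoClique c b T) (h : S ⊆ T) : IsMonoClique c b S :=
  Set.Pairwise.mono (coe_subset.2 h) hT

theorem IsMonoClique.union [DecidableEq V] (hsym : ∀ i j, c i j = c j i)
    (hS : IsMonoClique c b S) (hT : IsMonoClique c b T) (hST : ∀ u ∈ S, ∀ v ∈ T, c u v = b) :
    IsMonoClique c b (S ∪ T) := by
  have : Std.Symm fun i j => c i j = b := ⟨fun i j h => (hsym j i).trans h⟩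
  rw [IsMonoClique, coe_union, Set.pairwise_union_of_symm]
  exact ⟨hS, hT, fun u hu v hv _ => hST u hu v hv⟩

theorem IsMonoClique.card_add_card_le [DecidableEq V] (hsym : ∀ i j, c i j = c j i) {n : ℕ}
    (hS : IsMonoClique c b S) (hSA : S ⊆ A) (hA : ∀ T ⊆ A, IsMonoClique c b T → #T ≤ n)
    (hT : T ⊆ commonNbhd c b A S) (hTcl : IsMonoClique c b T) : #S + #T ≤ n := by
  have hdisj : Disjoint S T := disjoint_right.2 fun v hv => (mem_commonNbhd.1 (hT hv)).2.1
  rw [← card_union_of_disjoint hdisj]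
  refine hA _ (union_subset hSA (hT.trans (filter_subset _ _))) (hS.union hsym hTcl ?_)
  intro u hu v hv
  rw [hsym]
  exact (mem_commonNbhd.1 (hT hv)).2.2 u hu

theorem card_lt_choose_of_forall_isMonoClique_card_le [DecidableEq V]
    (hsym : ∀ i j, c i j = c j i) {s t : ℕ}
    (hs : ∀ S ⊆ A, IsMonoClique c b S → #S ≤ s) (ht : ∀ S ⊆ A, IsMonoClique c (!b) S → #S ≤ t) :
    #A < (s + t).choose s := by
  induction A using Finset.strongInduction generalizing s t with
  | H A ih =>
  obtain rfl | ⟨v, hv⟩ := A.eq_empty_or_nonempty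
  · simpa using Nat.choose_pos (Nat.le_add_right s t)
  have hvA : {v} ⊆ A := singleton_subset_iff.2 hv
  obtain _ | s := s
  · simpa using hs {v} hvA (isMonoClique_singleton v)
  obtain _ | t := t
  · simpa using ht {v} hvA (isMonoClique_singleton v)
  have hssubset : ∀ b', commonNbhd c b' A {v} ⊂ A := fun b' =>
    filter_ssubset.2 ⟨v, hv, by simp⟩
  have h₁ : #(commonNbhd c b A {v}) < (s + (t + 1)).choose s := by
    refine ih _ (hssubset b) (fun T hT hTcl => ?_) fun T hT => ht T (hT.trans (hssubset b).subset)
    have := (isMonoClique_singleton v).card_add_card_le hsym hvA hs hT hTcl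
    rw [card_singleton] at this
    omega
  have h₂ : #(commonNbhd c (!b) A {v}) < (s + (t + 1)).choose (s + 1) := by
    rw [show s + (t + 1) = s + 1 + t by omega]
    refine ih _ (hssubset (!b)) (fun T hT => hs T (hT.trans (hssubset (!b)).subset))
      fun T hT hTcl => ?_
    have := (isMonoClique_singleton v).card_add_card_le hsym hvA ht hT hTcl
    rw [card_singleton] at this
    omega
  have hcover : A ⊆ insert v (commonNbhd c b A {v} ∪ commonNbhd c (!b) A {v}) := by
    intro u hu
    by_cases huv : u = v
    · simp [huv]
    · cases hb : b <;> cases c u v <;> simp_all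
  calc #A ≤ #(commonNbhd c b A {v}) + #(commonNbhd c (!b) A {v}) + 1 :=
        (card_le_card hcover).trans
          ((card_insert_le _ _).trans (Nat.add_le_add_right (card_union_le _ _) 1))
    _ < (s + (t + 1) + 1).choose (s + 1) := by rw [Nat.choose_succ_succ']; omega
    _ = (s + 1 + (t + 1)).choose (s + 1) := by rw [show s + (t + 1) + 1 = s + 1 + (t + 1) by omega]

theorem card_commonNbhd_univ_lt [Fintype V] [DecidableEq V] (hsym : ∀ i j, c i j = c j i)
    {t : ℕ} (hlt : ∀ b (S : Finset V), IsMonoClique c b S → #S < t) (hS : IsMonoClique c b S) :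
    #(commonNbhd c b univ S) < (2 * t - 2 - #S).choose (t - 1) := by
  have hSt := hlt b S hS
  have := card_lt_choose_of_forall_isMonoClique_card_le hsym (b := b) (A := commonNbhd c b univ S)
    (s := t - 1 - #S) (t := t - 1) (fun T hT hTcl => ?_)
    fun T _ hTcl => Nat.le_sub_one_of_lt (hlt _ T hTcl)
  · rwa [show t - 1 - #S + (t - 1) = 2 * t - 2 - #S by omega,
      Nat.choose_symm_of_eq_add (a := t - 1 - #S) (b := t - 1) (by omega)] at this
  · have := hS.card_add_card_le hsym (subset_univ S)
      (fun T _ hT => Nat.le_sub_one_of_lt (hlt b T hT)) hT hTcl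
    omega

end

section

variable [Fintype V] [DecidableEq V] {c : V → V → Bool} {t : ℕ}

theorem succ_mul_card_monoCliques_succ_le (hsym : ∀ i j, c i j = c j i)
    (hlt : ∀ b (S : Finset V), IsMonoClique c b S → #S < t) (b : Bool) (r : ℕ) :
    (r + 1) * #(monoCliques c b (r + 1)) ≤
      #(monoCliques c b r) * (2 * t - 2 - r).choose (t - 1) := by
  rw [mul_comm]
  refine card_mul_le_card_mul (fun T S => S ⊆ T) (fun T hT => ?_) fun S hS => ?_
  · obtain ⟨hTcard, hTcl⟩ := (mem_filter.1 hT).2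
    calc r + 1 = #(powersetCard r T) := by
          rw [card_powersetCard, hTcard, Nat.choose_succ_self_right]
      _ ≤ _ := card_le_card fun S hS => by
          obtain ⟨hST, hScard⟩ := mem_powersetCard.1 hS
          exact mem_filter.2 ⟨mem_filter.2 ⟨mem_univ _, hScard, hTcl.mono hST⟩, hST⟩
  · obtain ⟨hScard, hScl⟩ := (mem_filter.1 hS).2
    calc #(bipartiteBelow _ _ S) ≤ #((commonNbhd c b univ S).image (insert · S)) :=
          card_le_card fun T hT => ?_
      _ ≤ #(commonNbhd c b univ S) := card_image_le
      _ ≤ _ := by rw [← hScard]; exact (card_commonNbhd_univ_lt hsym hlt hScl).le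
    obtain ⟨hT, hST⟩ := mem_filter.1 hT
    obtain ⟨hTcard, hTcl⟩ := (mem_filter.1 hT).2
    obtain ⟨v, hvS, rfl⟩ := exists_eq_insert_iff.2 ⟨hST, by omega⟩
    refine mem_image_of_mem _ (mem_commonNbhd.2 ⟨mem_univ _, hvS, fun u hu => ?_⟩)
    exact hTcl (mem_insert_self v S) (mem_insert_of_mem hu) (ne_of_mem_of_not_mem hu hvS).symm

theorem factorial_mul_card_monoCliques_le (hsym : ∀ i j, c i j = c j i)
    (hlt : ∀ b (S : Finset V), IsMonoClique c b S → #S < t) (b : Bool) (k : ℕ) :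
    k ! * #(monoCliques c b k) ≤ ∏ r ∈ range k, (2 * t - 2 - r).choose (t - 1) := by
  induction k with
  | zero =>
    simpa using card_le_one.2 fun S hS T hT => by
      rw [card_eq_zero.1 (mem_filter.1 hS).2.1, card_eq_zero.1 (mem_filter.1 hT).2.1]
  | succ k ih =>
    calc (k + 1)! * #(monoCliques c b (k + 1))
        = k ! * ((k + 1) * #(monoCliques c b (k + 1))) := by rw [Nat.factorial_succ]; ring
      _ ≤ k ! * (#(monoCliques c b k) * (2 * t - 2 - k).choose (t - 1)) :=
          Nat.mul_le_mul_left _ (succ_mul_card_monoCliques_succ_le hsym hlt b k)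
      _ = k ! * #(monoCliques c b k) * (2 * t - 2 - k).choose (t - 1) := (mul_assoc ..).symm
      _ ≤ _ := by rw [prod_range_succ]; exact Nat.mul_le_mul_right _ ih

theorem factorial_mul_card_monoCliques_union_le (hsym : ∀ i j, c i j = c j i)
    (hlt : ∀ b (S : Finset V), IsMonoClique c b S → #S < t) (k : ℕ) :
    k ! * #(monoCliques c true k ∪ monoCliques c false k) ≤
      2 * ∏ r ∈ range k, (2 * t - 2 - r).choose (t - 1) :=
  calc k ! * #(monoCliques c true k ∪ monoCliques c false k)
      ≤ k ! * #(monoCliques c true k) + k ! * #(monoCliques c false k) :=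
        (Nat.mul_le_mul_left _ (card_union_le _ _)).trans_eq (mul_add ..)
    _ ≤ _ := Nat.add_le_add (factorial_mul_card_monoCliques_le hsym hlt true k)
        (factorial_mul_card_monoCliques_le hsym hlt false k)
    _ = _ := (two_mul _).symm

end
end

theorem stmt_12_general (V : Type*) [Fintype V] [DecidableEq V]
    (c : V → V → Bool) (hsym : ∀ i j, c i j = c j i) (t k : ℕ)
    (hno : ¬ ∃ (S : Finset V) (b : Bool),
      S.card = t ∧ ∀ i ∈ S, ∀ j ∈ S, i ≠ j → c i j = b) :
    ((Finset.univ.filter (fun S : Finset V =>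
        S.card = k ∧ ∃ b, ∀ i ∈ S, ∀ j ∈ S, i ≠ j → c i j = b)).card : ℝ)
      ≤ (2 / (Nat.factorial k : ℝ)) *
        ∏ r ∈ Finset.range k, (((2 * t - 2 - r).choose (t - 1) : ℕ) : ℝ) := by
  have hlt : ∀ b (S : Finset V), IsMonoClique c b S → #S < t := by
    intro b S hS
    by_contra! h
    obtain ⟨T, hTS, hT⟩ := exists_subset_card_eq h
    exact hno ⟨T, b, hT, fun i hi j hj => hS.mono hTS hi hj⟩
  have hsplit : univ.filter (fun S : Finset V =>
      #S = k ∧ ∃ b, ∀ i ∈ S, ∀ j ∈ S, i ≠ j → c i j = b) ⊆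
      monoCliques c true k ∪ monoCliques c false k := by
    intro S hS
    obtain ⟨hk, b, hb⟩ := (mem_filter.1 hS).2
    have hS' : S ∈ monoCliques c b k :=
      mem_filter.2 ⟨mem_univ _, hk, fun i hi j hj => hb i hi j hj⟩
    cases b
    exacts [mem_union_right _ hS', mem_union_left _ hS']
  have hnat := (Nat.mul_le_mul_left k ! (card_le_card hsplit)).trans
    (factorial_mul_card_monoCliques_union_le hsym hlt k)
  rw [div_mul_eq_mul_div, le_div_iff₀ (by positivity), mul_comm]
  exact_mod_cast hnat

theorem stmt_12 (V : Type*) [Fintype V] [DecidableEq V]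
    (c : V → V → Bool) (hsym : ∀ i j, c i j = c j i) (t k : ℕ) (hkt : k < t)
    (hno : ¬ ∃ (S : Finset V) (b : Bool),
      S.card = t ∧ ∀ i ∈ S, ∀ j ∈ S, i ≠ j → c i j = b) :
    ((Finset.univ.filter (fun S : Finset V =>
        S.card = k ∧ ∃ b, ∀ i ∈ S, ∀ j ∈ S, i ≠ j → c i j = b)).card : ℝ)
      ≤ (2 / (Nat.factorial k : ℝ)) *
        ∏ r ∈ Finset.range k, (((2 * t - 2 - r).choose (t - 1) : ℕ) : ℝ) :=
  stmt_12_general V c hsym t k hno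
end

section
/- Let G be a 2-coloring of the edges of a complete graph with no monochromatic clique of size t+1, and let C be a red clique of size r with r ≤ t. Then the number of vertices outside C all of whose edges to C are red is strictly less than C(2t−r, t), the binomial coefficient. -/
def IsBClique {V : Type*} (c : V → V → Bool) (b : Bool) (T : Finset V) : Prop :=
  ∀ i ∈ T, ∀ j ∈ T, i ≠ j → c i j = b

lemma clique_insert {V : Type*} [DecidableEq V] {c : V → V → Bool}
    (hsym : ∀ i j, c i j = c j i) {b : Bool}
    {T : Finset V} {v : V} (hT : IsBClique c b T) (hv : ∀ u ∈ T, c v u = b) :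
    IsBClique c b (insert v T) := by
  intro i hi j hj hij
  simp only [Finset.mem_insert] at hi hj
  rcases hi with rfl | hi
  · rcases hj with rfl | hj
    · exact absurd rfl hij
    · exact hv _ hj
  · rcases hj with rfl | hj
    · rw [hsym]; exact hv _ hi
    · exact hT _ hi _ hj hij

lemma ramsey_aux {V : Type*} [DecidableEq V] (c : V → V → Bool)
    (hsym : ∀ i j, c i j = c j i) :
    ∀ k m n, m + n = k → ∀ S : Finset V, (m + n).choose m ≤ S.card →
    ∃ T ⊆ S, (T.card = m + 1 ∧ IsBClique c true T) ∨
      (T.card = n + 1 ∧ IsBClique c false T) := by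
  intro k
  induction k with
  | zero =>
    intro m n hmn S hS
    obtain ⟨rfl, rfl⟩ : m = 0 ∧ n = 0 := by omega
    simp only [Nat.choose_zero_right] at hS
    have hpos : 0 < S.card := by omega
    obtain ⟨v, hv⟩ := Finset.card_pos.mp hpos
    refine ⟨{v}, Finset.singleton_subset_iff.mpr hv, Or.inl ⟨Finset.card_singleton v, ?_⟩⟩
    intro i hi j hj hij
    simp only [Finset.mem_singleton] at hi hj
    exact absurd (hi.trans hj.symm) hij
  | succ k ih =>
    intro m n hmn S hS
    match m, n with
    | 0, n =>
      simp only [Nat.choose_zero_right] at hS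
      have hpos : 0 < S.card := by omega
      obtain ⟨v, hv⟩ := Finset.card_pos.mp hpos
      refine ⟨{v}, Finset.singleton_subset_iff.mpr hv, Or.inl ⟨Finset.card_singleton v, ?_⟩⟩
      intro i hi j hj hij
      simp only [Finset.mem_singleton] at hi hj
      exact absurd (hi.trans hj.symm) hij
    | m + 1, 0 =>
      have h1 : 1 ≤ S.card := le_trans (Nat.one_le_iff_ne_zero.mpr
        (Nat.choose_pos (by omega)).ne') hS
      have hpos : 0 < S.card := by omega
      obtain ⟨v, hv⟩ := Finset.card_pos.mp hpos
      refine ⟨{v}, Finset.singleton_subset_iff.mpr hv, Or.inr ⟨Finset.card_singleton v, ?_⟩⟩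
      intro i hi j hj hij
      simp only [Finset.mem_singleton] at hi hj
      exact absurd (hi.trans hj.symm) hij
    | m' + 1, n' + 1 =>
      have key : (m' + (n' + 1)).choose m' + ((m' + 1) + n').choose (m' + 1) ≤ S.card := by
        have h1 : (m' + 1 + (n' + 1)).choose (m' + 1) ≤ S.card := hS
        have h2 : m' + 1 + (n' + 1) = (m' + n' + 1) + 1 := by omega
        have h3 : m' + (n' + 1) = m' + n' + 1 := by omega
        have h4 : (m' + 1) + n' = m' + n' + 1 := by omega
        rw [h3, h4]
        rw [h2, Nat.choose_succ_succ] at h1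
        exact h1
      have hA : 1 ≤ (m' + (n' + 1)).choose m' := Nat.choose_pos (by omega)
      have hB : 1 ≤ ((m' + 1) + n').choose (m' + 1) := Nat.choose_pos (by omega)
      obtain ⟨v, hv⟩ := Finset.card_pos.mp (show 0 < S.card by omega)
      set R := (S.erase v).filter (fun u => c v u = true) with hR
      set Bl := (S.erase v).filter (fun u => ¬ (c v u = true)) with hBl
      have hcard : R.card + Bl.card = S.card - 1 := by
        rw [hR, hBl, Finset.card_filter_add_card_filter_not,
          Finset.card_erase_of_mem hv]
      rcases le_or_gt ((m' + (n' + 1)).choose m') R.card with hle | hlt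
      · obtain ⟨T, hTR, hT⟩ := ih m' (n' + 1) (by omega) R hle
        have hTS : T ⊆ S := hTR.trans ((Finset.filter_subset _ _).trans
          (Finset.erase_subset _ _))
        rcases hT with ⟨hcardT, hcl⟩ | ⟨hcardT, hcl⟩
        · have hvT : v ∉ T := fun h =>
            (Finset.ne_of_mem_erase (Finset.mem_of_mem_filter _ (hTR h))) rfl
          refine ⟨insert v T, ?_, Or.inl ⟨?_, ?_⟩⟩
          · exact Finset.insert_subset hv hTS
          · rw [Finset.card_insert_of_notMem hvT, hcardT]
          · exact clique_insert hsym hcl fun u hu =>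
              (Finset.mem_filter.mp (hTR hu)).2
        · exact ⟨T, hTS, Or.inr ⟨hcardT, hcl⟩⟩
      · have hle2 : ((m' + 1) + n').choose (m' + 1) ≤ Bl.card := by omega
        obtain ⟨T, hTB, hT⟩ := ih (m' + 1) n' (by omega) Bl hle2
        have hTS : T ⊆ S := hTB.trans ((Finset.filter_subset _ _).trans
          (Finset.erase_subset _ _))
        rcases hT with ⟨hcardT, hcl⟩ | ⟨hcardT, hcl⟩
        · exact ⟨T, hTS, Or.inl ⟨hcardT, hcl⟩⟩
        · have hvT : v ∉ T := fun h =>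
            (Finset.ne_of_mem_erase (Finset.mem_of_mem_filter _ (hTB h))) rfl
          refine ⟨insert v T, ?_, Or.inr ⟨?_, ?_⟩⟩
          · exact Finset.insert_subset hv hTS
          · rw [Finset.card_insert_of_notMem hvT, hcardT]
          · refine clique_insert hsym hcl fun u hu => ?_
            have := (Finset.mem_filter.mp (hTB hu)).2
            simpa using this

theorem stmt_13 (V : Type*) [Fintype V] [DecidableEq V]
    (c : V → V → Bool) (hsym : ∀ i j, c i j = c j i) (t : ℕ)
    (hno : ¬ ∃ (S : Finset V) (b : Bool),
      S.card = t + 1 ∧ ∀ i ∈ S, ∀ j ∈ S, i ≠ j → c i j = b)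
    (C : Finset V) (r : ℕ) (hC : C.card = r) (hrt : r ≤ t)
    (hred : ∀ i ∈ C, ∀ j ∈ C, i ≠ j → c i j = true) :
    (Finset.univ.filter (fun v : V => v ∉ C ∧ ∀ u ∈ C, c v u = true)).card
      < (2 * t - r).choose t := by
  by_contra hcon
  push_neg at hcon
  set L := Finset.univ.filter (fun v : V => v ∉ C ∧ ∀ u ∈ C, c v u = true) with hL
  have hch : ((t - r) + t).choose (t - r) = (2 * t - r).choose t := by
    have h1 : (t - r) + t = 2 * t - r := by omega
    rw [h1]
    have := Nat.choose_symm (show t ≤ 2 * t - r by omega)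
    rwa [show 2 * t - r - t = t - r by omega] at this
  have hle : ((t - r) + t).choose (t - r) ≤ L.card := by rw [hch]; exact hcon
  obtain ⟨T, hTL, hT⟩ := ramsey_aux c hsym ((t - r) + t) (t - r) t rfl L hle
  rcases hT with ⟨hcardT, hcl⟩ | ⟨hcardT, hcl⟩
  · -- red clique of size t - r + 1; combine with C
    have hdisj : Disjoint T C := by
      rw [Finset.disjoint_left]
      intro a haT haC
      exact (Finset.mem_filter.mp (hTL haT)).2.1 haC
    refine hno ⟨T ∪ C, true, ?_, ?_⟩
    · rw [Finset.card_union_of_disjoint hdisj, hcardT, hC]; omega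
    · intro i hi j hj hij
      rcases Finset.mem_union.mp hi with hiT | hiC
      · rcases Finset.mem_union.mp hj with hjT | hjC
        · exact hcl _ hiT _ hjT hij
        · exact (Finset.mem_filter.mp (hTL hiT)).2.2 _ hjC
      · rcases Finset.mem_union.mp hj with hjT | hjC
        · rw [hsym]; exact (Finset.mem_filter.mp (hTL hjT)).2.2 _ hiC
        · exact hred _ hiC _ hjC hij
  · exact hno ⟨T, false, hcardT, hcl⟩
end

section
/- Let G be a 2-coloring of the edges of the complete graph on n ≥ 6 vertices, let M be the maximum size of a monochromatic clique in G, and for each i let C_i be the number of monochromatic cliques of size i (counting each monochromatic vertex set once per color in which it is monochromatic). Then C_M ≤ C_{M−1}. -/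
theorem stmt_14 (n : ℕ) (hn : 6 ≤ n)
    (c : Fin n → Fin n → Bool) (hsym : ∀ i j, c i j = c j i)
    (M : ℕ)
    (hMmax : ∃ (S : Finset (Fin n)) (b : Bool),
      S.card = M ∧ ∀ i ∈ S, ∀ j ∈ S, i ≠ j → c i j = b)
    (hMub : ∀ (S : Finset (Fin n)) (b : Bool),
      (∀ i ∈ S, ∀ j ∈ S, i ≠ j → c i j = b) → S.card ≤ M) :
    (Finset.univ.filter (fun P : Finset (Fin n) × Bool =>
        P.1.card = M ∧ ∀ i ∈ P.1, ∀ j ∈ P.1, i ≠ j → c i j = P.2)).card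
      ≤ (Finset.univ.filter (fun P : Finset (Fin n) × Bool =>
        P.1.card = M - 1 ∧ ∀ i ∈ P.1, ∀ j ∈ P.1, i ≠ j → c i j = P.2)).card := by
  classical
  set s := Finset.univ.filter (fun P : Finset (Fin n) × Bool =>
      P.1.card = M ∧ ∀ i ∈ P.1, ∀ j ∈ P.1, i ≠ j → c i j = P.2) with hs
  set t := Finset.univ.filter (fun P : Finset (Fin n) × Bool =>
      P.1.card = M - 1 ∧ ∀ i ∈ P.1, ∀ j ∈ P.1, i ≠ j → c i j = P.2) with ht
  have hM1 : 1 ≤ M := by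
    have := hMub {(⟨0, by omega⟩ : Fin n)} true (by
      intro i hi j hj hij
      simp only [Finset.mem_singleton] at hi hj
      exact absurd (hi.trans hj.symm) hij)
    simpa using this
  have hchoose : M.choose (M - 1) = M := by
    obtain ⟨m, rfl⟩ := Nat.exists_eq_add_of_le hM1
    simp [Nat.add_comm, Nat.choose_symm_add]
  have key : s.card * M ≤ t.card * M := by
    apply Finset.card_mul_le_card_mul (fun P Q : Finset (Fin n) × Bool => Q.1 ⊆ P.1 ∧ Q.2 = P.2)
    · -- every M-clique contains M sub-cliques of size M-1
      intro P hP
      simp only [hs, Finset.mem_filter, Finset.mem_univ, true_and] at hP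
      obtain ⟨hcard, hmono⟩ := hP
      have hsub : (P.1.powersetCard (M-1)).image (fun S => (S, P.2)) ⊆
          t.bipartiteAbove (fun P Q : Finset (Fin n) × Bool => Q.1 ⊆ P.1 ∧ Q.2 = P.2) P := by
        intro Q hQ
        simp only [Finset.mem_image, Finset.mem_powersetCard] at hQ
        obtain ⟨S, ⟨hS1, hS2⟩, rfl⟩ := hQ
        simp only [Finset.mem_bipartiteAbove, ht, Finset.mem_filter, Finset.mem_univ, true_and]
        exact ⟨⟨hS2, fun i hi j hj hij => hmono i (hS1 hi) j (hS1 hj) hij⟩, hS1, by simp⟩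
      calc M = ((P.1.powersetCard (M-1)).image (fun S => (S, P.2))).card := by
              rw [Finset.card_image_of_injective _ (fun a b h => by simpa using h),
                Finset.card_powersetCard, hcard, hchoose]
        _ ≤ _ := Finset.card_le_card hsub
    · -- every (M-1)-clique extends to at most M cliques of size M
      intro Q hQ
      simp only [ht, Finset.mem_filter, Finset.mem_univ, true_and] at hQ
      obtain ⟨hcard, hmono⟩ := hQ
      set T := Finset.univ.filter (fun v : Fin n => v ∉ Q.1 ∧ ∀ i ∈ Q.1, c v i = Q.2) with hT
      have hTM : T.card ≤ M := by
        apply hMub T (!Q.2)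
        intro v hv w hw hvw
        simp only [hT, Finset.mem_filter, Finset.mem_univ, true_and] at hv hw
        by_contra hne
        have hcb : c v w = Q.2 := by
          cases hcvw : c v w <;> cases hb : Q.2 <;> simp_all
        have hwv : c w v = Q.2 := (hsym w v).trans hcb
        have hbig := hMub (insert v (insert w Q.1)) Q.2 ?_
        · have hvni : v ∉ insert w Q.1 := by simp [hvw, hv.1]
          have : (insert v (insert w Q.1)).card = M + 1 := by
            rw [Finset.card_insert_of_notMem hvni, Finset.card_insert_of_notMem hw.1, hcard]
            omega
          omega
        · intro i hi j hj hij
          simp only [Finset.mem_insert] at hi hj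
          rcases hi with hi | hi | hi <;> rcases hj with hj | hj | hj
          · exact absurd (hi.trans hj.symm) hij
          · rw [hi, hj]; exact hcb
          · rw [hi]; exact hv.2 j hj
          · rw [hi, hj]; exact hwv
          · exact absurd (hi.trans hj.symm) hij
          · rw [hi]; exact hw.2 j hj
          · rw [hj, hsym i v]; exact hv.2 i hi
          · rw [hj, hsym i w]; exact hw.2 i hi
          · exact hmono i hi j hj hij
      have hsub : s.bipartiteBelow (fun P Q : Finset (Fin n) × Bool => Q.1 ⊆ P.1 ∧ Q.2 = P.2) Q ⊆
          T.image (fun v => (insert v Q.1, Q.2)) := by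
        intro P hP
        simp only [Finset.mem_bipartiteBelow, hs, Finset.mem_filter, Finset.mem_univ,
          true_and] at hP
        obtain ⟨⟨hPcard, hPmono⟩, hQP, hQ2⟩ := hP
        have hd : (P.1 \ Q.1).card = 1 := by
          rw [Finset.card_sdiff_of_subset hQP, hPcard, hcard]; omega
        obtain ⟨v, hv⟩ := Finset.card_eq_one.mp hd
        have hvP : v ∈ P.1 ∧ v ∉ Q.1 := by
          have : v ∈ P.1 \ Q.1 := hv ▸ Finset.mem_singleton_self v
          exact ⟨(Finset.mem_sdiff.mp this).1, (Finset.mem_sdiff.mp this).2⟩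
        have hP1 : P.1 = insert v Q.1 := by
          have := Finset.sdiff_union_of_subset hQP
          rw [hv] at this
          rw [Finset.insert_eq]; exact this.symm
        refine Finset.mem_image.mpr ⟨v, ?_, ?_⟩
        · simp only [hT, Finset.mem_filter, Finset.mem_univ, true_and]
          refine ⟨hvP.2, fun i hi => ?_⟩
          have : c v i = P.2 := hPmono v hvP.1 i (hQP hi) (fun h => hvP.2 (h ▸ hi))
          rw [this, ← hQ2]
        · exact Prod.ext hP1.symm hQ2
      calc (s.bipartiteBelow (fun P Q : Finset (Fin n) × Bool => Q.1 ⊆ P.1 ∧ Q.2 = P.2) Q).card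
          ≤ (T.image (fun v => (insert v Q.1, Q.2))).card := Finset.card_le_card hsub
        _ ≤ T.card := Finset.card_image_le
        _ ≤ M := hTM
  exact Nat.le_of_mul_le_mul_right key hM1
end

section
/- Suppose t is a positive integer, p ∈ (0,1), and q(0), q(1), ..., q(i) are reals each in (0, p]. Define s(0) ≥ q(0)·(n−1) and s(j) ≥ q(j)·(s(j−1) − 1) for 1 ≤ j ≤ i, where n is a positive real. Then s(i) ≥ n·∏_{j=0}^{i} q(j) − p/(1−p). -/
/-! With `c = p / (1 - p)` the bound `q ≤ p` gives `q * (c + 1) ≤ c`, so each step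
`s ↦ q * (s - 1)` turns a lower bound `y - c` into `q * y - c`: the multiplicative loss
`q` applies to the main term while the additive error `c` is reproduced rather than
accumulated. Starting from `n - c ≤ n`, induction gives `n * ∏ q - c ≤ s i`. -/

open Finset

lemma mul_sub_le_mul_sub_one {q c x y : ℝ} (hq : 0 ≤ q) (hqc : q * (c + 1) ≤ c)
    (h : y - c ≤ x) : q * y - c ≤ q * (x - 1) := by
  nlinarith

lemma mul_add_one_le_div_one_sub {p q : ℝ} (hp : p < 1) (hq : q ≤ p) :
    q * (p / (1 - p) + 1) ≤ p / (1 - p) := by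
  have h1p : 0 < 1 - p := sub_pos.mpr hp
  have hc : p / (1 - p) + 1 = (1 - p)⁻¹ := by field_simp; ring
  rw [hc, ← div_eq_mul_inv]
  exact div_le_div_of_nonneg_right hq h1p.le

theorem mul_prod_sub_le_of_le_mul_sub_one {q s : ℕ → ℝ} {c : ℝ} (n : ℝ) (hc : 0 ≤ c)
    (i : ℕ) (hq : ∀ j ≤ i, 0 ≤ q j ∧ q j * (c + 1) ≤ c)
    (hs0 : q 0 * (n - 1) ≤ s 0)
    (hsj : ∀ j : ℕ, 1 ≤ j → j ≤ i → q j * (s (j - 1) - 1) ≤ s j) :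
    n * ∏ j ∈ range (i + 1), q j - c ≤ s i := by
  induction i with
  | zero =>
    obtain ⟨hq0, hqc⟩ := hq 0 le_rfl
    calc n * ∏ j ∈ range 1, q j - c = q 0 * n - c := by rw [prod_range_one, mul_comm]
      _ ≤ q 0 * (n - 1) := mul_sub_le_mul_sub_one hq0 hqc (by linarith)
      _ ≤ s 0 := hs0
  | succ i ih =>
    obtain ⟨hqi, hqc⟩ := hq (i + 1) le_rfl
    have hsi := ih (fun j hj => hq j (by omega)) (fun j h1 h2 => hsj j h1 (by omega))
    calc n * ∏ j ∈ range (i + 2), q j - c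
        = q (i + 1) * (n * ∏ j ∈ range (i + 1), q j) - c := by
          rw [prod_range_succ]; ring
      _ ≤ q (i + 1) * (s i - 1) := mul_sub_le_mul_sub_one hqi hqc hsi
      _ ≤ s (i + 1) := hsj (i + 1) (by omega) le_rfl

theorem stmt_17_general (i : ℕ) (p : ℝ) (hp0 : 0 < p) (hp1 : p < 1)
    (q : ℕ → ℝ) (hq : ∀ j ≤ i, 0 < q j ∧ q j ≤ p)
    (n : ℝ) (s : ℕ → ℝ)
    (hs0 : s 0 ≥ q 0 * (n - 1))
    (hsj : ∀ j : ℕ, 1 ≤ j → j ≤ i → s j ≥ q j * (s (j - 1) - 1)) :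
    s i ≥ n * (∏ j ∈ Finset.range (i + 1), q j) - p / (1 - p) := by
  have hc : 0 ≤ p / (1 - p) := div_nonneg hp0.le (by linarith)
  refine mul_prod_sub_le_of_le_mul_sub_one n hc i (fun j hj => ?_) hs0 hsj
  exact ⟨(hq j hj).1.le, mul_add_one_le_div_one_sub hp1 (hq j hj).2⟩

theorem stmt_17 (i : ℕ) (p : ℝ) (hp0 : 0 < p) (hp1 : p < 1)
    (q : ℕ → ℝ) (hq : ∀ j ≤ i, 0 < q j ∧ q j ≤ p)
    (n : ℝ) (hn : 0 < n) (s : ℕ → ℝ)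
    (hs0 : s 0 ≥ q 0 * (n - 1))
    (hsj : ∀ j : ℕ, 1 ≤ j → j ≤ i → s j ≥ q j * (s (j - 1) - 1)) :
    s i ≥ n * (∏ j ∈ Finset.range (i + 1), q j) - p / (1 - p) :=
  stmt_17_general i p hp0 hp1 q hq n s hs0 hsj
end
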